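/- arXiv:1104.2992 — 4 statements merged into one kernel-verified Lean document; each statement's English description precedes it below -/
import Mathlib

section
/- If Φ is a unital, trace-preserving, completely positive map (a bi-stochastic quantum channel) on the N×N complex matrices and ρ is a density matrix, then the von Neumann entropy does not decrease: S(Φ(ρ)) ≥ S(ρ). -/
open Matrix Kronecker
open scoped Classical ComplexOrder

noncomputable section

/-- Generalized matrix logarithm of a Hermitian matrix via its spectral
decomposition (with the convention `log 0 = 0` on the kernel). -/
def mlog {n : Type*} [Fintype n] [DecidableEq n] (A : Matrix n n ℂ) : Matrix n n ℂ :=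
  if h : A.IsHermitian then
    (h.eigenvectorUnitary : Matrix n n ℂ) *
      Matrix.diagonal (fun i => (Real.log (h.eigenvalues i) : ℂ)) *
      (star (h.eigenvectorUnitary : Matrix n n ℂ))
  else 0

/-- Von Neumann entropy `S(ρ) = -Tr(ρ log ρ)`. -/
def sEntropy {n : Type*} [Fintype n] [DecidableEq n] (ρ : Matrix n n ℂ) : ℝ :=
  -(ρ * mlog ρ).trace.re

/-- A density matrix: positive semidefinite with trace one. -/
def IsDensityMatrix {n : Type*} [Fintype n] [DecidableEq n] (ρ : Matrix n n ℂ) : Prop :=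
  ρ.PosSemidef ∧ ρ.trace = 1

/-- The extension `Φ ⊗ id_k` acting on `M_n ⊗ M_k`. -/
def tensorExt {n : Type*} [Fintype n] [DecidableEq n]
    (Φ : Matrix n n ℂ →ₗ[ℂ] Matrix n n ℂ) (k : ℕ) :
    Matrix (n × Fin k) (n × Fin k) ℂ → Matrix (n × Fin k) (n × Fin k) ℂ :=
  fun M => Matrix.of fun p q =>
    Φ (Matrix.of fun i j => M (i, p.2) (j, q.2)) p.1 q.1

/-- Complete positivity: `Φ ⊗ id_k` preserves positive semidefiniteness for all `k`. -/
def IsCP {n : Type*} [Fintype n] [DecidableEq n]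
    (Φ : Matrix n n ℂ →ₗ[ℂ] Matrix n n ℂ) : Prop :=
  ∀ (k : ℕ) (M : Matrix (n × Fin k) (n × Fin k) ℂ),
    M.PosSemidef → (tensorExt Φ k M).PosSemidef

/-- Trace preserving. -/
def IsTP {n : Type*} [Fintype n] [DecidableEq n]
    (Φ : Matrix n n ℂ →ₗ[ℂ] Matrix n n ℂ) : Prop :=
  ∀ X, (Φ X).trace = X.trace

/-- Unital. -/
def IsUnital {n : Type*} [Fintype n] [DecidableEq n]
    (Φ : Matrix n n ℂ →ₗ[ℂ] Matrix n n ℂ) : Prop :=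
  Φ 1 = 1

/-- `Ψ` is the adjoint of `Φ` for the Hilbert–Schmidt inner product
`⟨X, Y⟩ = Tr(X† Y)`. -/
def IsHSAdjoint {n : Type*} [Fintype n] [DecidableEq n]
    (Φ Ψ : Matrix n n ℂ →ₗ[ℂ] Matrix n n ℂ) : Prop :=
  ∀ A B, ((Φ A)ᴴ * B).trace = (Aᴴ * Ψ B).trace

/-- Choi–Jamiołkowski matrix `J(Θ) = Σ_{i,j} Θ(|i⟩⟨j|) ⊗ |i⟩⟨j|`. -/
def choi {n : Type*} [Fintype n] [DecidableEq n]
    (Θ : Matrix n n ℂ →ₗ[ℂ] Matrix n n ℂ) : Matrix (n × n) (n × n) ℂ :=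
  Matrix.of fun p q => Θ (Matrix.single p.2 q.2 1) p.1 q.1

/-- Partial trace over the first tensor factor. -/
def trFst {n : Type*} [Fintype n] [DecidableEq n]
    (A : Matrix (n × n) (n × n) ℂ) : Matrix n n ℂ :=
  Matrix.of fun i j => ∑ a, A (a, i) (a, j)

/-- The Kraus matrix `B(Φ)_{ij} = Σ_μ |⟨i|M_μ|j⟩|²` of a Kraus family. -/
def krausMatrix {n m : Type*} [Fintype n] [DecidableEq n] [Fintype m]
    (M : m → Matrix n n ℂ) : Matrix n n ℝ :=
  Matrix.of fun i j => ∑ μ, ‖M μ i j‖ ^ 2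

/-- Shannon entropy with the convention `0 log 0 = 0`. -/
def shannonEntropy {n : Type*} [Fintype n] (p : n → ℝ) : ℝ :=
  ∑ i, Real.negMulLog (p i)

/-- Probability vector. -/
def IsProbVec {n : Type*} [Fintype n] (p : n → ℝ) : Prop :=
  (∀ i, 0 ≤ p i) ∧ ∑ i, p i = 1

/-- Bi-stochastic real matrix. -/
def IsBistochasticMat {n : Type*} [Fintype n] (B : Matrix n n ℝ) : Prop :=
  (∀ i j, 0 ≤ B i j) ∧ (∀ i, ∑ j, B i j = 1) ∧ (∀ j, ∑ i, B i j = 1)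

/-- Quantum relative entropy, `+∞` when `supp(ρ) ⊄ supp(σ)`. -/
def relEntropy {n : Type*} [Fintype n] [DecidableEq n]
    (ρ σ : Matrix n n ℂ) : EReal :=
  if ∀ v, σ *ᵥ v = 0 → ρ *ᵥ v = 0 then
    (((ρ * (mlog ρ - mlog σ)).trace.re : ℝ) : EReal)
  else ⊤

/-- Real-valued quantum relative entropy (for use when `σ` has full support). -/
def relEntropyReal {n : Type*} [Fintype n] [DecidableEq n]
    (ρ σ : Matrix n n ℂ) : ℝ :=
  (ρ * (mlog ρ - mlog σ)).trace.re

/-- The super-operator `Ad_U ⊗ Ψ` on `M_{l×r}`. -/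
def adTensor {l r : Type*} [Fintype l] [DecidableEq l] [Fintype r] [DecidableEq r]
    (U : Matrix l l ℂ) (Ψ : Matrix r r ℂ →ₗ[ℂ] Matrix r r ℂ) :
    Matrix (l × r) (l × r) ℂ → Matrix (l × r) (l × r) ℂ :=
  fun X => Matrix.of fun p q =>
    ∑ a, ∑ b, U p.1 a * star (U q.1 b) *
      Ψ (Matrix.of fun s t => X (a, s) (b, t)) p.2 q.2

/-- The map `Φ ⊗ id` acting on `M_n ⊗ M_n`. -/
def applyLeft {n : Type*} [Fintype n] [DecidableEq n]
    (Φ : Matrix n n ℂ →ₗ[ℂ] Matrix n n ℂ) :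
    Matrix (n × n) (n × n) ℂ → Matrix (n × n) (n × n) ℂ :=
  fun M => Matrix.of fun p q =>
    Φ (Matrix.of fun i j => M (i, p.2) (j, q.2)) p.1 q.1

end

/-! ### Auxiliary lemmas -/

section Aux

open Matrix

noncomputable section

lemma mul_star_self_complex (z : ℂ) : z * star z = ((‖z‖ ^ 2 : ℝ) : ℂ) := by
  rw [Complex.star_def, Complex.mul_conj, Complex.normSq_eq_norm_sq]

lemma sum_comm3 {α β γ M : Type*} [Fintype α] [Fintype β] [Fintype γ] [AddCommMonoid M]
    (f : α → β → γ → M) :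
    ∑ a, ∑ b, ∑ c, f a b c = ∑ c, ∑ b, ∑ a, f a b c := by
  rw [Finset.sum_comm]
  rw [show (∑ b, ∑ a : α, ∑ c, f a b c) = ∑ b, ∑ c, ∑ a, f a b c from
    Finset.sum_congr rfl fun b _ => Finset.sum_comm]
  exact Finset.sum_comm

/-- Entropy as the Shannon entropy of the eigenvalues. -/
lemma sEntropy_eq_sum_negMulLog {n : Type*} [Fintype n] [DecidableEq n]
    {ρ : Matrix n n ℂ} (h : ρ.IsHermitian) :
    sEntropy ρ = ∑ i, Real.negMulLog (h.eigenvalues i) := by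
  have hsU : star (h.eigenvectorUnitary : Matrix n n ℂ) *
      (h.eigenvectorUnitary : Matrix n n ℂ) = 1 :=
    Matrix.UnitaryGroup.star_mul_self _
  have key : ρ * mlog ρ =
      (h.eigenvectorUnitary : Matrix n n ℂ) *
        (Matrix.diagonal (RCLike.ofReal ∘ h.eigenvalues) *
          (star (h.eigenvectorUnitary : Matrix n n ℂ) *
            (h.eigenvectorUnitary : Matrix n n ℂ)) *
          Matrix.diagonal (fun i => (Real.log (h.eigenvalues i) : ℂ))) *
        star (h.eigenvectorUnitary : Matrix n n ℂ) := by
    rw [mlog, dif_pos h]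
    nth_rewrite 1 [h.spectral_theorem]
    simp only [Unitary.conjStarAlgAut_apply, Matrix.mul_assoc]
  rw [sEntropy, key, hsU, Matrix.mul_one, Matrix.diagonal_mul_diagonal,
    Matrix.trace_mul_cycle, hsU, Matrix.one_mul]
  simp only [Matrix.trace_diagonal, Function.comp_apply, Complex.re_sum]
  have : ∀ i, ((RCLike.ofReal (h.eigenvalues i) : ℂ) *
      ((Real.log (h.eigenvalues i) : ℝ) : ℂ)).re
      = h.eigenvalues i * Real.log (h.eigenvalues i) := by
    intro i
    have h0 : (RCLike.ofReal (h.eigenvalues i) : ℂ) = ((h.eigenvalues i : ℝ) : ℂ) := rfl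
    rw [h0, ← Complex.ofReal_mul, Complex.ofReal_re]
  rw [Finset.sum_congr rfl fun i _ => this i]
  rw [← Finset.sum_neg_distrib]
  exact Finset.sum_congr rfl fun i _ => by rw [Real.negMulLog]; ring

lemma trace_mul_stdBasisMatrix {n : Type*} [Fintype n] [DecidableEq n]
    (A : Matrix n n ℂ) (s t : n) :
    (A * Matrix.single s t 1).trace = A t s := by
  simp [Matrix.trace, Matrix.diag, Matrix.mul_apply, Matrix.single,
    ite_and, Finset.sum_ite_eq]

lemma posSemidef_sum {n ι : Type*} [Fintype n] [Fintype ι]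
    (f : ι → Matrix n n ℂ) (h : ∀ i, (f i).PosSemidef) :
    (∑ i, f i).PosSemidef := by
  classical
  exact Finset.sum_induction f _ (fun a b ha hb => ha.add hb)
    Matrix.PosSemidef.zero (fun i _ => h i)

/-- Kraus decomposition of a completely positive map. -/
lemma exists_kraus {N : ℕ} (Φ : Matrix (Fin N) (Fin N) ℂ →ₗ[ℂ] Matrix (Fin N) (Fin N) ℂ)
    (hCP : IsCP Φ) :
    ∃ M : Fin N × Fin N → Matrix (Fin N) (Fin N) ℂ,
      ∀ X, Φ X = ∑ μ, M μ * X * (M μ)ᴴ := by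
  classical
  set B0 : Matrix (Fin 1) (Fin N × Fin N) ℂ :=
    Matrix.of (fun _ p => if p.1 = p.2 then 1 else 0) with hB0
  have hG : (B0ᴴ * B0).PosSemidef := Matrix.posSemidef_conjTranspose_mul_self B0
  have hEq : tensorExt Φ N (B0ᴴ * B0) = choi Φ := by
    ext p q
    show Φ (Matrix.of fun i j => (B0ᴴ * B0) (i, p.2) (j, q.2)) p.1 q.1
      = Φ (Matrix.single p.2 q.2 1) p.1 q.1
    have hmat : (Matrix.of fun i j => (B0ᴴ * B0) (i, p.2) (j, q.2))
        = Matrix.single p.2 q.2 (1 : ℂ) := by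
      ext i j
      simp only [Matrix.mul_apply, Matrix.conjTranspose_apply, Matrix.of_apply, hB0,
      Matrix.single, Fin.sum_univ_one]
      by_cases h1 : i = p.2 <;> by_cases h2 : j = q.2 <;>
        simp [h1, h2, eq_comm]
    rw [hmat]
  have hchoi : (choi Φ).PosSemidef := hEq ▸ hCP N _ hG
  obtain ⟨K, hK⟩ : ∃ K : Matrix (Fin N × Fin N) (Fin N × Fin N) ℂ, choi Φ = Kᴴ * K := by
    open MatrixOrder in exact CStarAlgebra.nonneg_iff_eq_star_mul_self.mp hchoi.nonneg
  refine ⟨fun μ => Matrix.of fun i s => star (K μ (i, s)), fun X => ?_⟩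
  have hsb : ∀ i j s t, Φ (Matrix.single s t 1) i j
      = ∑ μ, star (K μ (i, s)) * K μ (j, t) := by
    intro i j s t
    have h1 : Φ (Matrix.single s t 1) i j = choi Φ (i, s) (j, t) := rfl
    rw [h1, hK]
    simp [Matrix.mul_apply, Matrix.conjTranspose_apply]
  have hXd : Φ X = ∑ s, ∑ t, X s t • Φ (Matrix.single s t 1) := by
    conv_lhs => rw [Matrix.matrix_eq_sum_single X]
    rw [map_sum]
    refine Finset.sum_congr rfl fun s _ => ?_
    rw [map_sum]
    refine Finset.sum_congr rfl fun t _ => ?_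
    rw [show Matrix.single s t (X s t) = X s t • Matrix.single s t (1 : ℂ) by
      rw [Matrix.smul_single, smul_eq_mul, mul_one], Φ.map_smul]
  ext i j
  rw [hXd]
  simp only [Matrix.sum_apply, Matrix.smul_apply, smul_eq_mul, hsb,
    Matrix.mul_apply, Matrix.conjTranspose_apply, Matrix.of_apply, star_star,
    Finset.mul_sum, Finset.sum_mul]
  rw [sum_comm3]
  refine Finset.sum_congr rfl fun μ _ => Finset.sum_congr rfl fun t _ =>
    Finset.sum_congr rfl fun s _ => by ring

end

end Aux


/-- A bi-stochastic quantum channel does not decrease von Neumann entropy. -/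
theorem entropy_nondecreasing_of_bistochastic {N : ℕ}
    (Φ : Matrix (Fin N) (Fin N) ℂ →ₗ[ℂ] Matrix (Fin N) (Fin N) ℂ)
    (hCP : IsCP Φ) (hTP : IsTP Φ) (hUn : IsUnital Φ)
    (ρ : Matrix (Fin N) (Fin N) ℂ) (hρ : IsDensityMatrix ρ) :
    sEntropy ρ ≤ sEntropy (Φ ρ) := by
  classical
  obtain ⟨hρP, -⟩ := hρ
  obtain ⟨M, hM⟩ := exists_kraus Φ hCP
  -- unitality of the Kraus family
  have hU1 : ∑ μ, M μ * (M μ)ᴴ = 1 := by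
    have h1 := hM 1
    rw [hUn] at h1
    simpa using h1.symm
  -- trace preservation of the Kraus family
  have hT1 : ∑ μ, (M μ)ᴴ * M μ = 1 := by
    ext t s
    have h1 := hTP (Matrix.single s t 1)
    rw [hM] at h1
    have h2 : (∑ μ, M μ * Matrix.single s t 1 * (M μ)ᴴ).trace
        = ((∑ μ, (M μ)ᴴ * M μ) * Matrix.single s t 1).trace := by
      rw [Matrix.trace_sum, Finset.sum_mul, Matrix.trace_sum]
      exact Finset.sum_congr rfl fun μ _ => by
        rw [Matrix.trace_mul_cycle (M μ) (Matrix.single s t 1) ((M μ)ᴴ)]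
    rw [h2, trace_mul_stdBasisMatrix] at h1
    have h10 := trace_mul_stdBasisMatrix (1 : Matrix (Fin N) (Fin N) ℂ) s t
    rw [Matrix.one_mul] at h10
    rw [h1, h10]
  -- Φ ρ is positive semidefinite
  have hσP : (Φ ρ).PosSemidef := by
    rw [hM]
    exact posSemidef_sum _ fun μ => hρP.mul_mul_conjTranspose_same (M μ)
  have hρH : ρ.IsHermitian := hρP.isHermitian
  have hσH : (Φ ρ).IsHermitian := hσP.isHermitian
  set lam : Fin N → ℝ := hρH.eigenvalues with hlam
  set mu : Fin N → ℝ := hσH.eigenvalues with hmu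
  set V : Matrix (Fin N) (Fin N) ℂ := (hρH.eigenvectorUnitary : Matrix (Fin N) (Fin N) ℂ) with hV
  set W : Matrix (Fin N) (Fin N) ℂ := (hσH.eigenvectorUnitary : Matrix (Fin N) (Fin N) ℂ) with hW
  have hsV : star V * V = 1 := Matrix.UnitaryGroup.star_mul_self _
  have hVs : V * star V = 1 := hρH.eigenvectorUnitary.2.2
  have hsW : star W * W = 1 := Matrix.UnitaryGroup.star_mul_self _
  have hWs : W * star W = 1 := hσH.eigenvectorUnitary.2.2
  set T : Fin N × Fin N → Matrix (Fin N) (Fin N) ℂ := fun μ => star W * M μ * V with hT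
  set B : Matrix (Fin N) (Fin N) ℝ := Matrix.of fun i j => ∑ μ, ‖T μ i j‖ ^ 2 with hB
  have hBnn : ∀ i j, 0 ≤ B i j := fun i j =>
    Finset.sum_nonneg fun μ _ => sq_nonneg _
  -- diagonalization of Φ ρ
  have hWkey : star W * Φ ρ * W = Matrix.diagonal (RCLike.ofReal ∘ mu) := by
    nth_rewrite 1 [hσH.spectral_theorem]
    calc star W * (W * Matrix.diagonal (RCLike.ofReal ∘ mu) * star W) * W
        = (star W * W) * Matrix.diagonal (RCLike.ofReal ∘ mu) * (star W * W) := by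
          simp only [Matrix.mul_assoc]
      _ = Matrix.diagonal (RCLike.ofReal ∘ mu) := by rw [hsW]; simp
  -- the same matrix via the Kraus form
  have hTkey : star W * Φ ρ * W
      = ∑ μ, T μ * Matrix.diagonal (RCLike.ofReal ∘ lam) * (T μ)ᴴ := by
    nth_rewrite 1 [hM ρ]
    rw [Finset.mul_sum, Finset.sum_mul]
    refine Finset.sum_congr rfl fun μ _ => ?_
    nth_rewrite 1 [hρH.spectral_theorem]
    rw [hT]
    simp only [Unitary.conjStarAlgAut_apply, Matrix.conjTranspose_mul, Matrix.conjTranspose_conjTranspose,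
      Matrix.star_eq_conjTranspose, Matrix.mul_assoc]
    rfl
  -- eigenvalues of Φ ρ are B applied to eigenvalues of ρ
  have hmuB : ∀ i, mu i = ∑ j, B i j * lam j := by
    intro i
    have hDiag := hWkey.symm.trans hTkey
    have hent := congrFun (congrFun hDiag i) i
    rw [Matrix.diagonal_apply_eq] at hent
    have h3 : ((∑ μ, T μ * Matrix.diagonal (RCLike.ofReal ∘ lam) * (T μ)ᴴ :
        Matrix (Fin N) (Fin N) ℂ)) i i
        = ((∑ j, B i j * lam j : ℝ) : ℂ) := by
      rw [Matrix.sum_apply]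
      have h4 : ∀ μ, ((T μ * Matrix.diagonal (RCLike.ofReal ∘ lam) * (T μ)ᴴ :
            Matrix (Fin N) (Fin N) ℂ)) i i
          = ∑ j, ((‖T μ i j‖ ^ 2 * lam j : ℝ) : ℂ) := by
        intro μ
        rw [Matrix.mul_apply]
        refine Finset.sum_congr rfl fun j _ => ?_
        rw [Matrix.mul_diagonal, Matrix.conjTranspose_apply]
        have : T μ i j * RCLike.ofReal ((lam) j) * star (T μ i j)
            = ((lam j : ℝ) : ℂ) * (T μ i j * star (T μ i j)) := by
          have h0 : (RCLike.ofReal (lam j) : ℂ) = ((lam j : ℝ) : ℂ) := rfl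
          rw [h0]; ring
        rw [Function.comp_apply, this, mul_star_self_complex]
        push_cast
        ring
      rw [Finset.sum_congr rfl fun μ _ => h4 μ, Finset.sum_comm, Complex.ofReal_sum]
      refine Finset.sum_congr rfl fun j _ => ?_
      have hBij : B i j = ∑ μ, ‖T μ i j‖ ^ 2 := rfl
      rw [hBij, Finset.sum_mul]
      push_cast
      rfl
    rw [h3] at hent
    have h5 : ((mu i : ℝ) : ℂ) = ((∑ j, B i j * lam j : ℝ) : ℂ) := hent
    exact_mod_cast h5
  -- row sums of B are 1
  have hrow : ∀ i, ∑ j, B i j = 1 := by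
    intro i
    have hsum : ∑ μ, T μ * (T μ)ᴴ = 1 := by
      have h6 : ∀ μ, T μ * (T μ)ᴴ = star W * (M μ * (M μ)ᴴ) * W := by
        intro μ
        rw [hT]
        simp only [Matrix.conjTranspose_mul, Matrix.conjTranspose_conjTranspose,
          Matrix.star_eq_conjTranspose, Matrix.mul_assoc]
        rw [show (V : Matrix (Fin N) (Fin N) ℂ) * (Vᴴ * ((M μ)ᴴ * W)) = (M μ)ᴴ * W by
          rw [← Matrix.mul_assoc, ← Matrix.star_eq_conjTranspose, hVs, Matrix.one_mul]]
      rw [Finset.sum_congr rfl fun μ _ => h6 μ, ← Finset.sum_mul, ← Finset.mul_sum, hU1,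
        Matrix.mul_one, hsW]
    have hent := congrFun (congrFun hsum i) i
    have h7 : ((∑ μ, T μ * (T μ)ᴴ : Matrix (Fin N) (Fin N) ℂ)) i i
        = ((∑ j, B i j : ℝ) : ℂ) := by
      rw [Matrix.sum_apply]
      have h8 : ∀ μ, (T μ * (T μ)ᴴ) i i = ∑ j, ((‖T μ i j‖ ^ 2 : ℝ) : ℂ) := by
        intro μ
        rw [Matrix.mul_apply]
        exact Finset.sum_congr rfl fun j _ => by
          rw [Matrix.conjTranspose_apply, mul_star_self_complex]
      rw [Finset.sum_congr rfl fun μ _ => h8 μ, Finset.sum_comm, Complex.ofReal_sum]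
      refine Finset.sum_congr rfl fun j _ => ?_
      have hBij : B i j = ∑ μ, ‖T μ i j‖ ^ 2 := rfl
      rw [hBij]
      push_cast
      rfl
    rw [h7] at hent
    have h9 : ((∑ j, B i j : ℝ) : ℂ) = ((1 : ℝ) : ℂ) := by
      rw [hent, Matrix.one_apply_eq]; norm_num
    exact_mod_cast h9
  -- column sums of B are 1
  have hcol : ∀ j, ∑ i, B i j = 1 := by
    intro j
    have hsum : ∑ μ, (T μ)ᴴ * T μ = 1 := by
      have h6 : ∀ μ, (T μ)ᴴ * T μ = star V * ((M μ)ᴴ * M μ) * V := by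
        intro μ
        rw [hT]
        simp only [Matrix.conjTranspose_mul, Matrix.conjTranspose_conjTranspose,
          Matrix.star_eq_conjTranspose, Matrix.mul_assoc]
        rw [show (W : Matrix (Fin N) (Fin N) ℂ) * (Wᴴ * (M μ * V)) = M μ * V by
          rw [← Matrix.mul_assoc, ← Matrix.star_eq_conjTranspose, hWs, Matrix.one_mul]]
      rw [Finset.sum_congr rfl fun μ _ => h6 μ, ← Finset.sum_mul, ← Finset.mul_sum, hT1,
        Matrix.mul_one, hsV]
    have hent := congrFun (congrFun hsum j) j
    have h7 : ((∑ μ, (T μ)ᴴ * T μ : Matrix (Fin N) (Fin N) ℂ)) j j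
        = ((∑ i, B i j : ℝ) : ℂ) := by
      rw [Matrix.sum_apply]
      have h8 : ∀ μ, ((T μ)ᴴ * T μ) j j = ∑ i, ((‖T μ i j‖ ^ 2 : ℝ) : ℂ) := by
        intro μ
        rw [Matrix.mul_apply]
        exact Finset.sum_congr rfl fun i _ => by
          rw [Matrix.conjTranspose_apply, mul_comm, mul_star_self_complex]
      rw [Finset.sum_congr rfl fun μ _ => h8 μ, Finset.sum_comm, Complex.ofReal_sum]
      refine Finset.sum_congr rfl fun i _ => ?_
      have hBij : B i j = ∑ μ, ‖T μ i j‖ ^ 2 := rfl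
      rw [hBij]
      push_cast
      rfl
    rw [h7] at hent
    have h9 : ((∑ i, B i j : ℝ) : ℂ) = ((1 : ℝ) : ℂ) := by
      rw [hent, Matrix.one_apply_eq]; norm_num
    exact_mod_cast h9
  -- entropies as Shannon entropies of the spectra
  rw [sEntropy_eq_sum_negMulLog hρH, sEntropy_eq_sum_negMulLog hσH]
  -- Jensen / concavity argument
  calc ∑ j, Real.negMulLog (lam j)
      = ∑ j, (∑ i, B i j) * Real.negMulLog (lam j) := by
        refine Finset.sum_congr rfl fun j _ => ?_
        rw [hcol j, one_mul]
    _ = ∑ i, ∑ j, B i j * Real.negMulLog (lam j) := by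
        simp only [Finset.sum_mul]
        exact Finset.sum_comm
    _ ≤ ∑ i, Real.negMulLog (mu i) := by
        refine Finset.sum_le_sum fun i _ => ?_
        have hjen := Real.concaveOn_negMulLog.le_map_sum
          (t := Finset.univ) (w := fun j => B i j) (p := lam)
          (fun j _ => hBnn i j) (hrow i)
          (fun j _ => hρP.eigenvalues_nonneg j)
        rw [hmuB i]
        simpa [smul_eq_mul] using hjen
end

section
/- Let Φ be a bi-stochastic quantum channel on M_N(ℂ). If Φ decomposes as a direct sum over an orthogonal decomposition H = ⊕_k H^L_k ⊗ H^R_k, with Φ restricted to each block equal to Ad_{U_k} ⊗ Φ^R_k for unitary U_k on H^L_k and bi-stochastic Φ^R_k on L(H^R_k), and ρ = ⊕_k p_k ρ^L_k ⊗ (1/d^R_k) I_{H^R_k} for a probability vector (p_k) and density matrices ρ^L_k, then Φ†(Φ(ρ)) = ρ (and hence S(Φ(ρ)) = S(ρ)). -/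
open Matrix Kronecker
open scoped Classical ComplexOrder

noncomputable section AuxProof
open Polynomial

lemma det_charmatrix_of_decomp {n : Type*} [Fintype n] [DecidableEq n]
    (V : Matrix n n ℂ) (hV : V ∈ Matrix.unitaryGroup n ℂ) (μ : n → ℝ) :
    (charmatrix (V * Matrix.diagonal (fun i => (μ i : ℂ)) * star V)).det
      = ∏ i, (X - C (μ i : ℂ)) := by
  have hVV : V * star V = 1 := Matrix.mem_unitaryGroup_iff.mp hV
  set C' := ((Polynomial.C (R := ℂ)).mapMatrix : Matrix n n ℂ →+* Matrix n n ℂ[X]) with hC'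
  have h1 : C' V * C' (star V) = 1 := by rw [← _root_.map_mul, hVV, _root_.map_one]
  have key : charmatrix (V * Matrix.diagonal (fun i => (μ i : ℂ)) * star V)
      = C' V * charmatrix (Matrix.diagonal (fun i => (μ i : ℂ))) * C' (star V) := by
    unfold charmatrix
    rw [mul_sub, sub_mul, _root_.map_mul, _root_.map_mul]
    congr 1
    have hsc : ∀ M : Matrix n n ℂ[X], (Matrix.scalar n) X * M = M * (Matrix.scalar n) X :=
      fun M => Matrix.scalar_commute X (fun r => Commute.all _ _) M
    rw [← hsc, mul_assoc, h1, mul_one]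
  rw [key, Matrix.det_mul, Matrix.det_mul]
  have hdet : (C' V).det * (C' (star V)).det = 1 := by
    rw [← Matrix.det_mul, ← _root_.map_mul, hVV, _root_.map_one, Matrix.det_one]
  rw [mul_right_comm, hdet, one_mul]
  have : charmatrix (Matrix.diagonal (fun i => (μ i : ℂ)))
      = Matrix.diagonal (fun i => X - C (μ i : ℂ)) := by
    ext i j
    by_cases h : i = j <;> simp [charmatrix_apply, Matrix.diagonal_apply, h]
  rw [this, Matrix.det_diagonal]

lemma eig_multiset_unique {n : Type*} [Fintype n] [DecidableEq n]
    (V₁ V₂ : Matrix n n ℂ) (hV₁ : V₁ ∈ Matrix.unitaryGroup n ℂ)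
    (hV₂ : V₂ ∈ Matrix.unitaryGroup n ℂ) (μ ν : n → ℝ)
    (h : V₁ * Matrix.diagonal (fun i => (μ i : ℂ)) * star V₁
       = V₂ * Matrix.diagonal (fun i => (ν i : ℂ)) * star V₂) :
    (Finset.univ.val.map fun i => (μ i : ℂ)) = (Finset.univ.val.map fun i => (ν i : ℂ)) := by
  have h1 := det_charmatrix_of_decomp V₁ hV₁ μ
  have h2 := det_charmatrix_of_decomp V₂ hV₂ ν
  rw [h, h2] at h1
  have e1 : ∀ (μ : n → ℝ), (∏ i, (X - C (μ i : ℂ)))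
      = ((Finset.univ.val.map fun i => (μ i : ℂ)).map fun a => X - C a).prod := by
    intro μ
    rw [Multiset.map_map]
    rfl
  rw [e1, e1] at h1
  have := congrArg Polynomial.roots h1
  rw [roots_multiset_prod_X_sub_C, roots_multiset_prod_X_sub_C] at this
  exact this.symm

lemma conj_mul_conj {n : Type*} [Fintype n] [DecidableEq n]
    (V : Matrix n n ℂ) (hV : star V * V = 1) (D E : Matrix n n ℂ) :
    (V * D * star V) * (V * E * star V) = V * (D * E) * star V := by
  simp only [Matrix.mul_assoc]
  rw [← Matrix.mul_assoc (star V) V, hV, Matrix.one_mul]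

lemma sEntropy_eq_sum {n : Type*} [Fintype n] [DecidableEq n]
    (A : Matrix n n ℂ) (hA : A.IsHermitian) :
    sEntropy A = ∑ i, Real.negMulLog (hA.eigenvalues i) := by
  set V : Matrix n n ℂ := (hA.eigenvectorUnitary : Matrix n n ℂ) with hVdef
  have hV : star V * V = 1 := Matrix.mem_unitaryGroup_iff'.mp hA.eigenvectorUnitary.2
  have hlog : mlog A = V * Matrix.diagonal (fun i => (Real.log (hA.eigenvalues i) : ℂ)) * star V := by
    rw [mlog, dif_pos hA]
  have hspec : A = V * Matrix.diagonal (fun i => (hA.eigenvalues i : ℂ)) * star V := by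
    exact hA.spectral_theorem
  have : A * mlog A = V * (Matrix.diagonal fun i =>
      (hA.eigenvalues i : ℂ) * (Real.log (hA.eigenvalues i) : ℂ)) * star V := by
    calc A * mlog A
        = (V * Matrix.diagonal (fun i => (hA.eigenvalues i : ℂ)) * star V) *
          (V * Matrix.diagonal (fun i => (Real.log (hA.eigenvalues i) : ℂ)) * star V) := by
          rw [← hspec, ← hlog]
      _ = _ := by rw [conj_mul_conj V hV, Matrix.diagonal_mul_diagonal]
  rw [sEntropy, this]
  rw [Matrix.trace_mul_cycle, hV, Matrix.one_mul, Matrix.trace_diagonal]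
  rw [Complex.re_sum]
  rw [← Finset.sum_neg_distrib]
  apply Finset.sum_congr rfl
  intro i _
  simp [Real.negMulLog]

lemma sEntropy_conj {n : Type*} [Fintype n] [DecidableEq n]
    (A : Matrix n n ℂ) (hA : A.IsHermitian) (W : Matrix n n ℂ)
    (hW : W ∈ Matrix.unitaryGroup n ℂ) :
    sEntropy (W * A * star W) = sEntropy A := by
  have hB : (W * A * star W).IsHermitian := by
    rw [Matrix.star_eq_conjTranspose]
    exact Matrix.isHermitian_mul_mul_conjTranspose W hA
  rw [sEntropy_eq_sum _ hA, sEntropy_eq_sum _ hB]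
  set V₁ : Matrix n n ℂ := (hA.eigenvectorUnitary : Matrix n n ℂ)
  set V₂ : Matrix n n ℂ := (hB.eigenvectorUnitary : Matrix n n ℂ)
  have h1 : (W * V₁) * Matrix.diagonal (fun i => (hA.eigenvalues i : ℂ)) * star (W * V₁)
      = V₂ * Matrix.diagonal (fun i => (hB.eigenvalues i : ℂ)) * star V₂ := by
    have hspecA : A = V₁ * Matrix.diagonal (fun i => (hA.eigenvalues i : ℂ)) * star V₁ := by
      exact hA.spectral_theorem
    have hspecB : W * A * star W
        = V₂ * Matrix.diagonal (fun i => (hB.eigenvalues i : ℂ)) * star V₂ := by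
      exact hB.spectral_theorem
    rw [← hspecB]
    conv_rhs => rw [hspecA]
    rw [Matrix.star_mul]
    noncomm_ring
  have hmem : W * V₁ ∈ Matrix.unitaryGroup n ℂ := mul_mem hW hA.eigenvectorUnitary.2
  have hmul := eig_multiset_unique (W * V₁) V₂ hmem hB.eigenvectorUnitary.2 _ _ h1
  have e : ∀ (μ : n → ℝ), (∑ i, Real.negMulLog (μ i))
      = ((Finset.univ.val.map fun i => (μ i : ℂ)).map fun z => Real.negMulLog z.re).sum := by
    intro μ
    rw [Multiset.map_map]
    have : ((fun z : ℂ => Real.negMulLog z.re) ∘ fun i => ((μ i : ℂ))) =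
        fun i => Real.negMulLog (μ i) := by funext i; simp
    rw [this]
    rfl
  rw [e hA.eigenvalues, e hB.eigenvalues, hmul]

lemma hs_contraction {n : Type*} [Fintype n] [DecidableEq n]
    (Φ : Matrix n n ℂ →ₗ[ℂ] Matrix n n ℂ) (hCP : IsCP Φ) (hTP : IsTP Φ)
    (hUn : IsUnital Φ) (X : Matrix n n ℂ) :
    ∑ p : n × n, ‖Φ X p.1 p.2‖ ^ 2 ≤ ∑ p : n × n, ‖X p.1 p.2‖ ^ 2 := by
  classical
  set Y : Matrix n (n × Fin 2) ℂ :=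
    Matrix.of fun t p => if p.2 = 0 then X t p.1 else if t = p.1 then 1 else 0 with hY
  set M := Yᴴ * Y with hMdef
  have hM : M.PosSemidef := Matrix.posSemidef_conjTranspose_mul_self Y
  have hN : (tensorExt Φ 2 M).PosSemidef := hCP 2 M hM
  set N := tensorExt Φ 2 M with hNdef
  have hMapp : ∀ p q, M p q = ∑ t, (starRingEnd ℂ) (Y t p) * Y t q := by
    intro p q
    simp [hMdef, Matrix.mul_apply, Matrix.conjTranspose_apply]
  have hE10 : (Matrix.of fun s t => M (s, (1 : Fin 2)) (t, (0 : Fin 2))) = X := by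
    ext s t
    simp [hMapp, hY]
  have hE11 : (Matrix.of fun s t => M (s, (1 : Fin 2)) (t, (1 : Fin 2)))
      = (1 : Matrix n n ℂ) := by
    ext s t
    simp only [hMapp, hY, Matrix.of_apply, Matrix.one_apply]
    norm_num
    simp [apply_ite, Finset.sum_ite_eq]
    split_ifs with h
    · exact h.symm
    · exact fun e => h e.symm
  have hE00 : (Matrix.of fun s t => M (s, (0 : Fin 2)) (t, (0 : Fin 2))) = Xᴴ * X := by
    ext s t
    simp [hMapp, hY, Matrix.mul_apply, Matrix.conjTranspose_apply]
  have hN10 : ∀ i j, N (i, (1 : Fin 2)) (j, (0 : Fin 2)) = Φ X i j := by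
    intro i j
    show Φ (Matrix.of fun s t => M (s, (1 : Fin 2)) (t, (0 : Fin 2))) i j = _
    rw [hE10]
  have hN11 : ∀ i j, N (i, (1 : Fin 2)) (j, (1 : Fin 2)) = (1 : Matrix n n ℂ) i j := by
    intro i j
    show Φ (Matrix.of fun s t => M (s, (1 : Fin 2)) (t, (1 : Fin 2))) i j = _
    rw [hE11, hUn]
  have hN00 : ∀ i j, N (i, (0 : Fin 2)) (j, (0 : Fin 2)) = Φ (Xᴴ * X) i j := by
    intro i j
    show Φ (Matrix.of fun s t => M (s, (0 : Fin 2)) (t, (0 : Fin 2))) i j = _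
    rw [hE00]
  have hN01 : ∀ i j, N (i, (0 : Fin 2)) (j, (1 : Fin 2)) = (starRingEnd ℂ) (Φ X j i) := by
    intro i j
    rw [← hN10 j i, ← hN.1.apply (i, (0 : Fin 2)) (j, (1 : Fin 2))]
    rfl
  have key : ∀ i₀ : n, (∑ i, ‖Φ X i i₀‖ ^ 2 : ℝ) ≤ (Φ (Xᴴ * X) i₀ i₀).re := by
    intro i₀
    set w : n × Fin 2 → ℂ := fun p => if p.2 = 0 then (if p.1 = i₀ then 1 else 0)
      else -(Φ X p.1 i₀) with hw
    have h0 := hN.dotProduct_mulVec_nonneg w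
    have hexp : star w ⬝ᵥ (N *ᵥ w) = Φ (Xᴴ * X) i₀ i₀
        - ∑ i, Φ X i i₀ * (starRingEnd ℂ) (Φ X i i₀) := by
      simp only [dotProduct, mulVec, Pi.star_apply, RCLike.star_def, Fintype.sum_prod_type,
        Fin.sum_univ_two]
      simp only [hw]
      norm_num
      simp only [hN00, hN01, hN10, hN11, Matrix.one_apply, apply_ite, _root_.map_one,
        _root_.map_zero, mul_ite, ite_mul, one_mul, zero_mul, mul_one, mul_zero,
        Finset.sum_ite_eq, Finset.sum_ite_eq', Finset.mem_univ, if_true, dotProduct]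
      have inner0 : ∀ x : n, (∑ y, if x = y then (if y = i₀ then Φ X x y else 0) + -Φ X y i₀
          else (if y = i₀ then Φ X x y else 0)) = 0 := by
        intro x
        have hsplit : ∀ y, (if x = y then (if y = i₀ then Φ X x y else 0) + -Φ X y i₀
            else (if y = i₀ then Φ X x y else 0))
            = (if y = i₀ then Φ X x y else 0) + (if x = y then -Φ X y i₀ else 0) := by
          intro y; split_ifs <;> ring
        simp [hsplit, Finset.sum_add_distrib, Finset.sum_ite_eq, Finset.sum_ite_eq']
      simp [inner0, Finset.sum_add_distrib, Finset.sum_ite_eq, Finset.sum_ite_eq',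
        sub_eq_add_neg, mul_comm, add_zero]
    rw [hexp] at h0
    have h1 := (Complex.le_def.mp h0).1
    simp only [Complex.zero_re, Complex.sub_re, Complex.re_sum, Complex.mul_conj,
      Complex.ofReal_re] at h1
    have h2 : ∀ i, Complex.normSq (Φ X i i₀) = ‖Φ X i i₀‖ ^ 2 := by
      intro i
      simp [Complex.normSq_eq_norm_sq]
    simp only [h2] at h1
    linarith
  calc ∑ p : n × n, ‖Φ X p.1 p.2‖ ^ 2
      = ∑ i₀, ∑ i, ‖Φ X i i₀‖ ^ 2 := by
        rw [Fintype.sum_prod_type, Finset.sum_comm]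
    _ ≤ ∑ i₀, (Φ (Xᴴ * X) i₀ i₀).re := Finset.sum_le_sum fun i₀ _ => key i₀
    _ = (Φ (Xᴴ * X)).trace.re := by rw [Matrix.trace]; simp [Complex.re_sum, Matrix.diag]
    _ = (Xᴴ * X).trace.re := by rw [hTP]
    _ = ∑ p : n × n, ‖X p.1 p.2‖ ^ 2 := by
        rw [Matrix.trace, Fintype.sum_prod_type, Finset.sum_comm]
        simp only [Matrix.diag, Matrix.mul_apply, Matrix.conjTranspose_apply, Complex.re_sum]
        apply Finset.sum_congr rfl; intro i₀ _
        apply Finset.sum_congr rfl; intro i _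
        have : star (X i i₀) = (starRingEnd ℂ) (X i i₀) := rfl
        rw [this, mul_comm, Complex.mul_conj]
        simp [Complex.normSq_eq_norm_sq, ← Complex.ofReal_pow]

open scoped InnerProductSpace

def toE {n : Type*} [Fintype n] [DecidableEq n] (A : Matrix n n ℂ) :
    EuclideanSpace ℂ (n × n) := WithLp.toLp 2 (fun p : n × n => A p.1 p.2)

lemma toE_injective {n : Type*} [Fintype n] [DecidableEq n] :
    Function.Injective (toE (n := n)) := by
  intro A B h
  ext i j
  exact congrFun (congrArg WithLp.ofLp h) (i, j)

lemma inner_toE {n : Type*} [Fintype n] [DecidableEq n] (A B : Matrix n n ℂ) :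
    ⟪toE A, toE B⟫_ℂ = (Aᴴ * B).trace := by
  simp only [PiLp.inner_apply, RCLike.inner_apply, toE, PiLp.toLp_apply, Matrix.trace, Matrix.diag,
    Matrix.mul_apply, Matrix.conjTranspose_apply, Fintype.sum_prod_type]
  rw [Finset.sum_comm]
  simp [RCLike.star_def, mul_comm]

lemma norm_toE_sq {n : Type*} [Fintype n] [DecidableEq n] (A : Matrix n n ℂ) :
    ‖toE A‖ ^ 2 = ∑ p : n × n, ‖A p.1 p.2‖ ^ 2 := by
  rw [toE, EuclideanSpace.norm_sq_eq]

lemma fixed_point_of_norm_eq {n : Type*} [Fintype n] [DecidableEq n]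
    (Φ Φd : Matrix n n ℂ →ₗ[ℂ] Matrix n n ℂ)
    (hcontr : ∀ X, ‖toE (Φ X)‖ ≤ ‖toE X‖)
    (hAdj : IsHSAdjoint Φ Φd)
    (ρ : Matrix n n ℂ) (hnorm : ‖toE (Φ ρ)‖ = ‖toE ρ‖) :
    Φd (Φ ρ) = ρ := by
  set σ := Φ ρ with hσ
  set τ := Φd σ with hτ
  set x := toE ρ
  set y := toE τ
  set s := toE σ
  have hxy : ⟪x, y⟫_ℂ = ⟪s, s⟫_ℂ := by
    rw [inner_toE, inner_toE, ← hAdj ρ σ, hσ]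
  have hyy : ⟪y, y⟫_ℂ = ⟪toE (Φ τ), s⟫_ℂ := by
    rw [inner_toE, inner_toE, ← hAdj τ σ, hτ]
  have hy_le : ‖y‖ ≤ ‖s‖ := by
    have h1 : (‖y‖ : ℂ) ^ 2 = ⟪toE (Φ τ), s⟫_ℂ :=
      (inner_self_eq_norm_sq_to_K y).symm.trans hyy
    have h2 : ‖y‖ ^ 2 ≤ ‖y‖ * ‖s‖ := by
      calc ‖y‖ ^ 2 = ‖(‖y‖ : ℂ) ^ 2‖ := by
            rw [norm_pow, Complex.norm_real, Real.norm_of_nonneg (norm_nonneg _)]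
        _ = ‖⟪toE (Φ τ), s⟫_ℂ‖ := by rw [h1]
        _ ≤ ‖toE (Φ τ)‖ * ‖s‖ := norm_inner_le_norm _ _
        _ ≤ ‖y‖ * ‖s‖ := by
            apply mul_le_mul_of_nonneg_right (hcontr τ) (norm_nonneg _)
    nlinarith [norm_nonneg y, norm_nonneg s]
  have hsx : ‖s‖ = ‖x‖ := hnorm
  have hfinal : ‖x - y‖ ^ 2 ≤ 0 := by
    rw [norm_sub_sq (𝕜 := ℂ)]
    have hre : RCLike.re ⟪x, y⟫_ℂ = ‖x‖ ^ 2 := by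
      rw [hxy, inner_self_eq_norm_sq, hsx]
    rw [hre]
    nlinarith [hy_le, hsx, norm_nonneg x, norm_nonneg y]
  have hz : x - y = 0 := by
    have := norm_nonneg (x - y)
    have h0 : ‖x - y‖ = 0 := by nlinarith
    exact norm_eq_zero.mp h0
  have hxeqy : x = y := by rwa [sub_eq_zero] at hz
  exact (toE_injective hxeqy).symm

lemma kronecker_conjTranspose {l r : Type*} [Fintype l] [Fintype r]
    (A : Matrix l l ℂ) (B : Matrix r r ℂ) : (A ⊗ₖ B)ᴴ = Aᴴ ⊗ₖ Bᴴ := by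
  ext p q
  simp [Matrix.conjTranspose_apply, Matrix.kroneckerMap_apply]

end AuxProof

/-- if `Φ = ⊕_k Ad_{U_k} ⊗ Φ^R_k` on `⊕_k H^L_k ⊗ H^R_k` and
`ρ = ⊕_k p_k ρ^L_k ⊗ (1/d^R_k) I`, then `Φ†(Φ(ρ)) = ρ` and `S(Φ(ρ)) = S(ρ)`. -/
theorem adjoint_comp_fixed_of_decomposition
    {ι : Type*} [Fintype ι] [DecidableEq ι]
    (L R : ι → Type*) [∀ k, Fintype (L k)] [∀ k, DecidableEq (L k)]
    [∀ k, Fintype (R k)] [∀ k, DecidableEq (R k)]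
    (Φ Φd : Matrix ((k : ι) × (L k × R k)) ((k : ι) × (L k × R k)) ℂ →ₗ[ℂ]
            Matrix ((k : ι) × (L k × R k)) ((k : ι) × (L k × R k)) ℂ)
    (hCP : IsCP Φ) (hTP : IsTP Φ) (hUn : IsUnital Φ)
    (hAdj : IsHSAdjoint Φ Φd)
    (U : ∀ k, Matrix (L k) (L k) ℂ)
    (hU : ∀ k, U k ∈ Matrix.unitaryGroup (L k) ℂ)
    (ΦR : ∀ k, Matrix (R k) (R k) ℂ →ₗ[ℂ] Matrix (R k) (R k) ℂ)
    (hΦRCP : ∀ k, IsCP (ΦR k)) (hΦRTP : ∀ k, IsTP (ΦR k))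
    (hΦRUn : ∀ k, IsUnital (ΦR k))
    (hΦdecomp : ∀ X : ∀ k, Matrix (L k × R k) (L k × R k) ℂ,
      Φ (Matrix.blockDiagonal' X) =
        Matrix.blockDiagonal' (fun k => adTensor (U k) (ΦR k) (X k)))
    (p : ι → ℝ) (hp : IsProbVec p)
    (ρL : ∀ k, Matrix (L k) (L k) ℂ) (hρL : ∀ k, IsDensityMatrix (ρL k))
    (ρ : Matrix ((k : ι) × (L k × R k)) ((k : ι) × (L k × R k)) ℂ)
    (hρ : ρ = Matrix.blockDiagonal'
      (fun k => (p k : ℂ) •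
        (ρL k ⊗ₖ (((Fintype.card (R k) : ℂ))⁻¹ • (1 : Matrix (R k) (R k) ℂ))))) :
    Φd (Φ ρ) = ρ ∧ sEntropy (Φ ρ) = sEntropy ρ := by
  classical
  set Xb : ∀ k, Matrix (L k × R k) (L k × R k) ℂ :=
    fun k => (p k : ℂ) •
      (ρL k ⊗ₖ (((Fintype.card (R k) : ℂ))⁻¹ • (1 : Matrix (R k) (R k) ℂ))) with hXb
  set Wb : ∀ k, Matrix (L k × R k) (L k × R k) ℂ :=
    fun k => (U k) ⊗ₖ (1 : Matrix (R k) (R k) ℂ) with hWbdef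
  set W := Matrix.blockDiagonal' Wb with hWdef
  have hstarWb : ∀ k, star (Wb k) = (star (U k)) ⊗ₖ (1 : Matrix (R k) (R k) ℂ) := by
    intro k
    show star ((U k) ⊗ₖ (1 : Matrix (R k) (R k) ℂ)) = _
    rw [Matrix.star_eq_conjTranspose, kronecker_conjTranspose, Matrix.conjTranspose_one,
      Matrix.star_eq_conjTranspose]
  have hWbU : ∀ k, Wb k * star (Wb k) = 1 := by
    intro k
    rw [hstarWb k]
    show ((U k) ⊗ₖ (1 : Matrix (R k) (R k) ℂ)) * _ = 1
    rw [← Matrix.mul_kronecker_mul, Matrix.mem_unitaryGroup_iff.mp (hU k), Matrix.one_mul,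
      Matrix.one_kronecker_one]
  have hWunit : W ∈ Matrix.unitaryGroup ((k : ι) × (L k × R k)) ℂ := by
    rw [Matrix.mem_unitaryGroup_iff, hWdef, Matrix.star_eq_conjTranspose,
      Matrix.blockDiagonal'_conjTranspose, ← Matrix.blockDiagonal'_mul]
    rw [show (fun k => Wb k * (Wb k)ᴴ) = fun _ => 1 from funext fun k => by
      rw [← Matrix.star_eq_conjTranspose]; exact hWbU k]
    exact Matrix.blockDiagonal'_one
  have hWs : star W * W = 1 := Matrix.mem_unitaryGroup_iff'.mp hWunit
  have hblock : ∀ k, adTensor (U k) (ΦR k) (Xb k) = Wb k * Xb k * star (Wb k) := by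
    intro k
    have hXform : Wb k * Xb k * star (Wb k)
        = (p k : ℂ) • ((U k * ρL k * star (U k)) ⊗ₖ
            (((Fintype.card (R k) : ℂ))⁻¹ • (1 : Matrix (R k) (R k) ℂ))) := by
      rw [hstarWb k]
      show ((U k) ⊗ₖ (1 : Matrix (R k) (R k) ℂ)) *
          ((p k : ℂ) • (ρL k ⊗ₖ (((Fintype.card (R k) : ℂ))⁻¹ • (1 : Matrix (R k) (R k) ℂ)))) *
          ((star (U k)) ⊗ₖ (1 : Matrix (R k) (R k) ℂ)) = _
      rw [Matrix.mul_smul, Matrix.smul_mul]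
      congr 1
      rw [← Matrix.mul_kronecker_mul, ← Matrix.mul_kronecker_mul]
      congr 1
      simp
    rw [hXform]
    ext ⟨p1, p2⟩ ⟨q1, q2⟩
    show ∑ a, ∑ b, U k p1 a * star (U k q1 b) *
        (ΦR k) (Matrix.of fun s t => Xb k (a, s) (b, t)) p2 q2 = _
    have hinner : ∀ a b, (Matrix.of fun s t => Xb k (a, s) (b, t))
        = ((p k : ℂ) * ρL k a b * ((Fintype.card (R k) : ℂ))⁻¹) •
            (1 : Matrix (R k) (R k) ℂ) := by
      intro a b
      ext s t
      show ((p k : ℂ) • (ρL k ⊗ₖ (((Fintype.card (R k) : ℂ))⁻¹ •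
        (1 : Matrix (R k) (R k) ℂ)))) (a, s) (b, t) = _
      simp only [Matrix.smul_apply, Matrix.kroneckerMap_apply, Matrix.one_apply,
        smul_eq_mul, mul_ite, mul_zero, mul_one]
      by_cases h : s = t <;> simp [h] <;> ring
    have hu : (ΦR k) 1 = 1 := hΦRUn k
    simp only [hinner, _root_.map_smul, hu]
    simp only [Matrix.smul_apply, Matrix.kroneckerMap_apply, Matrix.one_apply, smul_eq_mul,
      mul_ite, mul_zero, mul_one]
    by_cases h : p2 = q2
    · simp only [h, if_true]
      rw [Matrix.mul_apply]
      simp only [Matrix.mul_apply, Matrix.star_apply, Finset.sum_mul, Finset.mul_sum]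
      rw [Finset.sum_comm]
      apply Finset.sum_congr rfl; intro a _
      apply Finset.sum_congr rfl; intro b _
      ring
    · simp [h]
  have hρblocks : ρ = Matrix.blockDiagonal' Xb := hρ
  have hΦρ : Φ ρ = W * ρ * star W := by
    rw [hρblocks, hΦdecomp Xb]
    rw [show (fun k => adTensor (U k) (ΦR k) (Xb k)) = fun k => Wb k * Xb k * star (Wb k) from
      funext hblock]
    rw [hWdef, Matrix.star_eq_conjTranspose, Matrix.blockDiagonal'_conjTranspose,
      ← Matrix.blockDiagonal'_mul, ← Matrix.blockDiagonal'_mul]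
    simp only [Matrix.star_eq_conjTranspose]
  have hρHerm : ρ.IsHermitian := by
    show ρᴴ = ρ
    rw [hρblocks, Matrix.blockDiagonal'_conjTranspose]
    refine congrArg Matrix.blockDiagonal' (funext fun k => ?_)
    simp only [hXb]
    rw [Matrix.conjTranspose_smul, kronecker_conjTranspose, Matrix.conjTranspose_smul,
      Matrix.conjTranspose_one, (hρL k).1.1]
    congr 1
    · exact Complex.conj_ofReal _
    · congr 1
      rw [star_inv₀, star_natCast]
  have hcontr : ∀ X, ‖toE (Φ X)‖ ≤ ‖toE X‖ := by
    intro X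
    have h := hs_contraction Φ hCP hTP hUn X
    have h1 := norm_toE_sq (Φ X)
    have h2 := norm_toE_sq X
    nlinarith [norm_nonneg (toE (Φ X)), norm_nonneg (toE X)]
  have htr : ∀ A : Matrix ((k : ι) × (L k × R k)) ((k : ι) × (L k × R k)) ℂ,
      ‖toE A‖ ^ 2 = ((Aᴴ * A).trace).re := by
    intro A
    rw [← inner_self_eq_norm_sq (𝕜 := ℂ), inner_toE]
    rfl
  have hnorm : ‖toE (Φ ρ)‖ = ‖toE ρ‖ := by
    have hWconj : (W * ρ * star W)ᴴ = W * ρᴴ * star W := by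
      rw [Matrix.star_eq_conjTranspose, Matrix.conjTranspose_mul, Matrix.conjTranspose_mul,
        Matrix.conjTranspose_conjTranspose]
      noncomm_ring
    have hsq : ‖toE (Φ ρ)‖ ^ 2 = ‖toE ρ‖ ^ 2 := by
      rw [htr, htr, hΦρ, hWconj, conj_mul_conj W hWs]
      rw [Matrix.trace_mul_cycle, ← Matrix.mul_assoc, hWs, Matrix.one_mul]
    have h1 := norm_nonneg (toE (Φ ρ))
    have h2 := norm_nonneg (toE ρ)
    nlinarith
  refine ⟨fixed_point_of_norm_eq Φ Φd hcontr hAdj ρ hnorm, ?_⟩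
  rw [hΦρ]
  exact sEntropy_conj ρ hρHerm W hWunit
end

section
/- Let Φ be a bi-stochastic quantum channel and Ψ a quantum channel (trace-preserving completely positive map) on M_N(ℂ). Then the map entropy satisfies S^map(Φ ∘ Ψ) = S^map(Ψ) if and only if Φ† ∘ Φ ∘ Ψ = Ψ. -/
open Matrix Kronecker
open scoped Classical ComplexOrder

namespace MapEntAux
set_option linter.unusedSectionVars false

open Matrix Complex Real

variable {m : Type*} [Fintype m] [DecidableEq m]

/-- Hilbert–Schmidt pairing. -/
noncomputable def hsDot (A B : Matrix m m ℂ) : ℂ := (Aᴴ * B).trace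

/-- Squared Hilbert–Schmidt norm. -/
noncomputable def hsNormSq (A : Matrix m m ℂ) : ℝ := ∑ a, ∑ b, Complex.normSq (A a b)

lemma hsDot_eq_sum (A B : Matrix m m ℂ) :
    hsDot A B = ∑ a, ∑ b, (starRingEnd ℂ) (A a b) * B a b := by
  rw [hsDot]
  simp only [Matrix.trace, Matrix.diag, Matrix.mul_apply, Matrix.conjTranspose_apply]
  rw [Finset.sum_comm]
  simp [Complex.star_def]

lemma star_hsDot (A B : Matrix m m ℂ) : star (hsDot A B) = hsDot B A := by
  simp only [hsDot, ← Matrix.trace_conjTranspose, Matrix.conjTranspose_mul,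
    Matrix.conjTranspose_conjTranspose]

lemma hsNormSq_eq_dot (A : Matrix m m ℂ) : (hsNormSq A : ℂ) = hsDot A A := by
  rw [hsDot_eq_sum, hsNormSq]
  push_cast
  refine Finset.sum_congr rfl fun a _ => Finset.sum_congr rfl fun b _ => ?_
  rw [Complex.normSq_eq_conj_mul_self]

lemma hsNormSq_sub (A B : Matrix m m ℂ) :
    hsNormSq (A - B) = hsNormSq A + hsNormSq B - 2 * (hsDot B A).re := by
  have key : hsDot (A - B) (A - B) = hsDot A A + hsDot B B - (hsDot A B + hsDot B A) := by
    simp only [hsDot, Matrix.conjTranspose_sub, Matrix.sub_mul, Matrix.mul_sub,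
      Matrix.trace_sub]
    ring
  have h1 : (hsDot A B).re = (hsDot B A).re := by
    rw [← star_hsDot A B]; simp [Complex.star_def]
  have := congrArg Complex.re key
  have e1 : (hsNormSq (A - B) : ℂ).re = hsNormSq (A - B) := Complex.ofReal_re _
  rw [hsNormSq_eq_dot] at *
  rw [← e1, key]
  simp only [Complex.sub_re, Complex.add_re, ← hsNormSq_eq_dot, Complex.ofReal_re]
  rw [h1]; ring

lemma hsNormSq_nonneg (A : Matrix m m ℂ) : 0 ≤ hsNormSq A :=
  Finset.sum_nonneg fun _ _ => Finset.sum_nonneg fun _ _ => Complex.normSq_nonneg _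

lemma eq_of_hsNormSq_sub_eq_zero {A B : Matrix m m ℂ} (h : hsNormSq (A - B) ≤ 0) : A = B := by
  have h0 : hsNormSq (A - B) = 0 := le_antisymm h (hsNormSq_nonneg _)
  ext a b
  have h1 : ∀ a ∈ (Finset.univ : Finset m), (∑ b, Complex.normSq ((A - B) a b)) = 0 := by
    intro a _
    have := (Finset.sum_eq_zero_iff_of_nonneg (fun x _ =>
      Finset.sum_nonneg fun y _ => Complex.normSq_nonneg _)).1 h0
    exact this a (Finset.mem_univ a)
  have h2 := (Finset.sum_eq_zero_iff_of_nonneg (fun y _ => Complex.normSq_nonneg _)).1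
    (h1 a (Finset.mem_univ a)) b (Finset.mem_univ b)
  have h3 : (A - B) a b = 0 := Complex.normSq_eq_zero.mp h2
  have := sub_eq_zero.mp h3
  simpa [Matrix.sub_apply, sub_eq_zero] using h3

end MapEntAux

namespace MapEntAux
set_option linter.unusedSectionVars false

open Matrix Complex Real

variable {m : Type*} [Fintype m] [DecidableEq m]

section Spectral

variable {A : Matrix m m ℂ} (hA : A.IsHermitian)

lemma star_mul_self_eigen : star (hA.eigenvectorUnitary : Matrix m m ℂ) *
    (hA.eigenvectorUnitary : Matrix m m ℂ) = 1 :=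
  Matrix.mem_unitaryGroup_iff'.mp hA.eigenvectorUnitary.2

lemma mul_star_self_eigen : (hA.eigenvectorUnitary : Matrix m m ℂ) *
    star (hA.eigenvectorUnitary : Matrix m m ℂ) = 1 :=
  Matrix.mem_unitaryGroup_iff.mp hA.eigenvectorUnitary.2

lemma spectral_eq' : A = (hA.eigenvectorUnitary : Matrix m m ℂ) *
    Matrix.diagonal (RCLike.ofReal ∘ hA.eigenvalues) *
    star (hA.eigenvectorUnitary : Matrix m m ℂ) := by
  have h := hA.spectral_theorem
  simp only [Unitary.conjStarAlgAut_apply, Unitary.coe_star] at h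
  exact h

lemma mlog_of_isHermitian : mlog A = (hA.eigenvectorUnitary : Matrix m m ℂ) *
    Matrix.diagonal (fun i => (Real.log (hA.eigenvalues i) : ℂ)) *
    star (hA.eigenvectorUnitary : Matrix m m ℂ) := dif_pos hA

lemma conj_mul_conj (M1 M2 : Matrix m m ℂ) :
    ((hA.eigenvectorUnitary : Matrix m m ℂ) * M1 * star (hA.eigenvectorUnitary : Matrix m m ℂ)) *
    ((hA.eigenvectorUnitary : Matrix m m ℂ) * M2 * star (hA.eigenvectorUnitary : Matrix m m ℂ)) =
    (hA.eigenvectorUnitary : Matrix m m ℂ) * (M1 * M2) *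
      star (hA.eigenvectorUnitary : Matrix m m ℂ) := by
  have h1 : ∀ X : Matrix m m ℂ, star (hA.eigenvectorUnitary : Matrix m m ℂ) *
      ((hA.eigenvectorUnitary : Matrix m m ℂ) * X) = X := fun X => by
    rw [← Matrix.mul_assoc, star_mul_self_eigen hA, Matrix.one_mul]
  simp only [Matrix.mul_assoc, h1]

lemma trace_conj (M : Matrix m m ℂ) :
    ((hA.eigenvectorUnitary : Matrix m m ℂ) * M *
      star (hA.eigenvectorUnitary : Matrix m m ℂ)).trace = M.trace := by
  rw [Matrix.trace_mul_cycle, star_mul_self_eigen hA, Matrix.one_mul]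

lemma trace_mul_mlog : (A * mlog A).trace =
    ((∑ i, hA.eigenvalues i * Real.log (hA.eigenvalues i) : ℝ) : ℂ) := by
  have step : (A * mlog A).trace =
      (((hA.eigenvectorUnitary : Matrix m m ℂ) *
        Matrix.diagonal (RCLike.ofReal ∘ hA.eigenvalues) *
        star (hA.eigenvectorUnitary : Matrix m m ℂ)) *
      ((hA.eigenvectorUnitary : Matrix m m ℂ) *
        Matrix.diagonal (fun i => (Real.log (hA.eigenvalues i) : ℂ)) *
        star (hA.eigenvectorUnitary : Matrix m m ℂ))).trace := by
    rw [mlog_of_isHermitian hA, ← spectral_eq' hA]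
  rw [step, conj_mul_conj hA, trace_conj hA, Matrix.diagonal_mul_diagonal,
    Matrix.trace_diagonal]
  push_cast
  rfl

lemma sEntropy_eq : sEntropy A = ∑ i, Real.negMulLog (hA.eigenvalues i) := by
  rw [sEntropy, trace_mul_mlog hA]
  rw [Complex.ofReal_re]
  rw [← Finset.sum_neg_distrib]
  exact Finset.sum_congr rfl fun i _ => by rw [Real.negMulLog]; ring

lemma hsNormSq_of_isHermitian : hsNormSq A = ∑ i, (hA.eigenvalues i)^2 := by
  have step : (hsNormSq A : ℂ) = ((∑ i, (hA.eigenvalues i)^2 : ℝ) : ℂ) := by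
    rw [hsNormSq_eq_dot, hsDot, hA.eq]
    have step2 : (A * A).trace =
        (((hA.eigenvectorUnitary : Matrix m m ℂ) *
          Matrix.diagonal (RCLike.ofReal ∘ hA.eigenvalues) *
          star (hA.eigenvectorUnitary : Matrix m m ℂ)) *
        ((hA.eigenvectorUnitary : Matrix m m ℂ) *
          Matrix.diagonal (RCLike.ofReal ∘ hA.eigenvalues) *
          star (hA.eigenvectorUnitary : Matrix m m ℂ))).trace := by
      rw [← spectral_eq' hA]
    rw [step2, conj_mul_conj hA, trace_conj hA, Matrix.diagonal_mul_diagonal,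
      Matrix.trace_diagonal]
    push_cast
    exact Finset.sum_congr rfl fun i _ => by simp [RCLike.ofReal] <;> ring
  exact_mod_cast step

end Spectral

lemma diagonal_eq_sum (d : m → ℂ) :
    Matrix.diagonal d = ∑ j, d j • Matrix.single j j 1 := by
  ext i k
  rw [Matrix.sum_apply]
  by_cases h : i = k
  · subst h
    rw [Matrix.diagonal_apply_eq]
    rw [Finset.sum_eq_single i]
    · simp [Matrix.single]
    · intro b _ hb; simp [Matrix.single, hb]
    · simp
  · rw [Matrix.diagonal_apply_ne _ h]
    symm
    apply Finset.sum_eq_zero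
    intro j _
    simp only [Matrix.smul_apply, Matrix.single, Matrix.of_apply]
    rcases eq_or_ne j i with rfl | hj
    · simp [h]
    · simp [hj]

lemma sum_stdBasis : ∑ j, Matrix.single j j (1:ℂ) = (1 : Matrix m m ℂ) := by
  have := diagonal_eq_sum (fun _ => (1:ℂ) : m → ℂ)
  simpa [Matrix.diagonal_one] using this.symm

lemma trace_stdBasis (j : m) : (Matrix.single j j (1:ℂ)).trace = 1 := by
  simp [Matrix.trace, Matrix.diag, Matrix.single]

lemma psd_stdBasis (j : m) : (Matrix.single j j (1:ℂ)).PosSemidef := by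
  have h : Matrix.single j j (1:ℂ) = Matrix.diagonal (Pi.single j 1) := by
    ext i k
    simp only [Matrix.single, Matrix.of_apply, Matrix.diagonal_apply, Pi.single_apply]
    rcases eq_or_ne i k with rfl | hik
    · rcases eq_or_ne j i with rfl | hj
      · simp
      · simp [hj, Ne.symm hj]
    · rcases eq_or_ne j i with rfl | hj
      · simp [Ne.symm hik, hik]
      · simp [hik, fun h : j = i => hj h]
  rw [h]
  exact Matrix.PosSemidef.diagonal (by
    intro i
    rcases eq_or_ne i j with rfl | hij
    · simp
    · simp [Pi.single_apply, hij])

lemma diag_nonneg {P : Matrix m m ℂ} (hP : P.PosSemidef) (i : m) : 0 ≤ P i i := by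
  simpa [Matrix.mulVec_single, dotProduct, Pi.single_apply, Finset.sum_ite_eq]
    using hP.dotProduct_mulVec_nonneg (Pi.single i 1)

end MapEntAux

namespace MapEntAux
set_option linter.unusedSectionVars false

open Matrix Complex Real

variable {m : Type*} [Fintype m] [DecidableEq m]

lemma trace_psd_nonneg {P : Matrix m m ℂ} (hP : P.PosSemidef) : 0 ≤ P.trace :=
  Finset.sum_nonneg fun i _ => diag_nonneg hP i

lemma hsDot_nonneg_of_psd {P Q : Matrix m m ℂ} (hP : P.PosSemidef) (hQ : Q.PosSemidef) :
    0 ≤ hsDot P Q := by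
  obtain ⟨B, hB⟩ : ∃ B : Matrix m m ℂ, Q = Bᴴ * B := by
    open scoped MatrixOrder in exact CStarAlgebra.nonneg_iff_eq_star_mul_self.mp hQ.nonneg
  rw [hsDot, hP.1, hB, ← Matrix.mul_assoc, Matrix.trace_mul_cycle]
  exact trace_psd_nonneg (hP.mul_mul_conjTranspose_same B)

/-- rank-one projector `x xᴴ`. -/
noncomputable def outer (x : m → ℂ) : Matrix m m ℂ := Matrix.of fun a b => x a * star (x b)

lemma outer_psd (x : m → ℂ) : (outer x).PosSemidef := by
  refine Matrix.PosSemidef.of_dotProduct_mulVec_nonneg ?_ ?_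
  · ext a b
    simp only [Matrix.conjTranspose_apply, outer, Matrix.of_apply, star_mul', star_star]
    ring
  · intro y
    have h : star y ⬝ᵥ (outer x) *ᵥ y = (∑ a, star (y a) * x a) * (∑ b, star (x b) * y b) := by
      rw [Finset.sum_mul_sum]
      simp only [dotProduct, Matrix.mulVec, outer, Matrix.of_apply, Pi.star_apply,
        Finset.mul_sum]
      exact Finset.sum_congr rfl fun a _ => Finset.sum_congr rfl fun b _ => by ring
    have h2 : (∑ b, star (x b) * y b) = star (∑ a, star (y a) * x a) := by
      rw [star_sum]
      exact Finset.sum_congr rfl fun a _ => by simp [star_mul']; ring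
    rw [h, h2]
    exact mul_star_self_nonneg _

lemma qform_eq_hsDot (x : m → ℂ) (M : Matrix m m ℂ) :
    star x ⬝ᵥ M *ᵥ x = hsDot (outer x) M := by
  rw [hsDot_eq_sum]
  simp only [dotProduct, Matrix.mulVec, Pi.star_apply, outer, Matrix.of_apply,
    Finset.mul_sum, starRingEnd_apply, star_mul', star_star]
  exact Finset.sum_congr rfl fun a _ => Finset.sum_congr rfl fun b _ => by ring

lemma hsDot_std (a b : m) (M : Matrix m m ℂ) :
    hsDot (Matrix.single a b 1) M = M a b := by
  simp [hsDot_eq_sum, Matrix.single, ite_and, apply_ite (starRingEnd ℂ),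
    Finset.sum_ite_eq]

lemma hsDot_add_left (A B M : Matrix m m ℂ) :
    hsDot (A + B) M = hsDot A M + hsDot B M := by
  simp [hsDot, Matrix.conjTranspose_add, Matrix.add_mul]

lemma hsDot_sub_left (A B M : Matrix m m ℂ) :
    hsDot (A - B) M = hsDot A M - hsDot B M := by
  simp [hsDot, Matrix.conjTranspose_sub, Matrix.sub_mul]

lemma hsDot_smul_left (c : ℂ) (A M : Matrix m m ℂ) :
    hsDot (c • A) M = (starRingEnd ℂ) c * hsDot A M := by
  simp [hsDot, Matrix.conjTranspose_smul, Matrix.smul_mul, Matrix.trace_smul]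

lemma stdBasis_conjT (a b : m) :
    (Matrix.single a b (1:ℂ))ᴴ = Matrix.single b a 1 := by
  ext i j
  simp only [Matrix.conjTranspose_apply, Matrix.single, Matrix.of_apply]
  rcases eq_or_ne b i with rfl | h1 <;> rcases eq_or_ne a j with rfl | h2 <;> simp [*]

lemma isHermitian_of_real_pairing {M : Matrix m m ℂ}
    (h : ∀ A : Matrix m m ℂ, A.IsHermitian → (hsDot A M).im = 0) : M.IsHermitian := by
  have key : ∀ a b : m, (starRingEnd ℂ) (M b a) = M a b := by
    intro a b
    have h1 : (M a b + M b a).im = 0 := by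
      have hH : (Matrix.single a b 1 + Matrix.single b a (1:ℂ)).IsHermitian := by
        unfold Matrix.IsHermitian
        rw [Matrix.conjTranspose_add, stdBasis_conjT, stdBasis_conjT, add_comm]
      have hh := h _ hH
      rwa [hsDot_add_left, hsDot_std, hsDot_std] at hh
    have h2 : (Complex.I * M a b - Complex.I * M b a).im = 0 := by
      have hH : (Complex.I • Matrix.single a b 1
          - Complex.I • Matrix.single b a (1:ℂ)).IsHermitian := by
        unfold Matrix.IsHermitian
        rw [Matrix.conjTranspose_sub, Matrix.conjTranspose_smul, Matrix.conjTranspose_smul,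
          stdBasis_conjT, stdBasis_conjT]
        simp only [Complex.star_def, Complex.conj_I, neg_smul]
        abel
      have hh := h _ hH
      rw [hsDot_sub_left, hsDot_smul_left, hsDot_smul_left, hsDot_std, hsDot_std,
        Complex.conj_I] at hh
      have heq : Complex.I * M a b - Complex.I * M b a
          = -((-Complex.I) * M a b - (-Complex.I) * M b a) := by ring
      rw [heq, Complex.neg_im, hh, neg_zero]
    have hre : (M a b).re = (M b a).re := by
      simp only [Complex.sub_im, Complex.mul_im, Complex.I_re, Complex.I_im] at h2
      linarith
    have him : (M a b).im = -(M b a).im := by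
      simp only [Complex.add_im] at h1
      linarith
    apply Complex.ext
    · rw [Complex.conj_re, hre]
    · rw [Complex.conj_im, him]
  ext i j
  rw [Matrix.conjTranspose_apply]
  have := key i j
  rwa [starRingEnd_apply] at this

end MapEntAux

namespace MapEntAux
set_option linter.unusedSectionVars false

open Matrix Complex Real

variable {m : Type*} [Fintype m] [DecidableEq m]

lemma herm_pres (L : Matrix m m ℂ →ₗ[ℂ] Matrix m m ℂ)
    (hpos : ∀ P : Matrix m m ℂ, P.PosSemidef → (L P).PosSemidef)
    {A : Matrix m m ℂ} (hA : A.IsHermitian) : (L A).IsHermitian := by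
  set U := (hA.eigenvectorUnitary : Matrix m m ℂ) with hU
  set P := U * Matrix.diagonal (fun i => ((max (hA.eigenvalues i) 0 : ℝ) : ℂ)) * Uᴴ with hPdef
  set Q := U * Matrix.diagonal (fun i => ((max (-hA.eigenvalues i) 0 : ℝ) : ℂ)) * Uᴴ with hQdef
  have hPQ : A = P - Q := by
    have hd : Matrix.diagonal (RCLike.ofReal ∘ hA.eigenvalues : m → ℂ) =
        Matrix.diagonal (fun i => ((max (hA.eigenvalues i) 0 : ℝ) : ℂ)) -
        Matrix.diagonal (fun i => ((max (-hA.eigenvalues i) 0 : ℝ) : ℂ)) := by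
      ext i j
      rcases eq_or_ne i j with rfl | hij
      · have hr : max (hA.eigenvalues i) 0 - max (-hA.eigenvalues i) 0 = hA.eigenvalues i := by
          rcases le_total (hA.eigenvalues i) 0 with h | h
          · rw [max_eq_right h, max_eq_left (by linarith)]; ring
          · rw [max_eq_left h, max_eq_right (by linarith)]; ring
        simp only [Matrix.sub_apply, Matrix.diagonal_apply_eq, Function.comp_apply]
        rw [← Complex.ofReal_sub, hr]
        rfl
      · simp [Matrix.diagonal_apply_ne _ hij]
    conv_lhs => rw [spectral_eq' hA]
    rw [hd, Matrix.mul_sub, Matrix.sub_mul, hPdef, hQdef, hU, Matrix.star_eq_conjTranspose]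
  have hP : P.PosSemidef := by
    refine Matrix.PosSemidef.mul_mul_conjTranspose_same ?_ U
    exact Matrix.PosSemidef.diagonal fun i => Complex.zero_le_real.mpr (le_max_right _ 0)
  have hQ : Q.PosSemidef := by
    refine Matrix.PosSemidef.mul_mul_conjTranspose_same ?_ U
    exact Matrix.PosSemidef.diagonal fun i => Complex.zero_le_real.mpr (le_max_right _ 0)
  rw [hPQ, map_sub]
  exact Matrix.IsHermitian.sub (hpos P hP).1 (hpos Q hQ).1

lemma psd_of_adjoint (L : Matrix m m ℂ →ₗ[ℂ] Matrix m m ℂ)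
    (L' : Matrix m m ℂ → Matrix m m ℂ)
    (hadj : ∀ A B : Matrix m m ℂ, hsDot (L A) B = hsDot A (L' B))
    (hpos : ∀ P : Matrix m m ℂ, P.PosSemidef → (L P).PosSemidef)
    {B : Matrix m m ℂ} (hB : B.PosSemidef) : (L' B).PosSemidef := by
  refine Matrix.PosSemidef.of_dotProduct_mulVec_nonneg ?_ ?_
  · apply isHermitian_of_real_pairing
    intro A hA
    rw [← hadj]
    have h1 : (L A).IsHermitian := herm_pres L hpos hA
    have h2 : (starRingEnd ℂ) (hsDot (L A) B) = hsDot (L A) B := by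
      have hs := star_hsDot (L A) B
      rw [starRingEnd_apply, hs, hsDot, hsDot, hB.1, h1, Matrix.trace_mul_comm]
    exact Complex.conj_eq_iff_im.mp h2
  · intro x
    rw [qform_eq_hsDot, ← hadj]
    exact hsDot_nonneg_of_psd (hpos _ (outer_psd x)) hB

end MapEntAux

namespace MapEntAux
set_option linter.unusedSectionVars false

open Matrix Complex Real

variable {m : Type*} [Fintype m] [DecidableEq m]

lemma exists_DS (Λ : Matrix m m ℂ →ₗ[ℂ] Matrix m m ℂ)
    (hpos : ∀ P : Matrix m m ℂ, P.PosSemidef → (Λ P).PosSemidef)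
    (hu : Λ 1 = 1) (htp : ∀ M : Matrix m m ℂ, (Λ M).trace = M.trace)
    {ρ : Matrix m m ℂ} (hρ : ρ.IsHermitian) (hσ : (Λ ρ).IsHermitian) :
    ∃ D : m → m → ℝ, (∀ i j, 0 ≤ D i j) ∧ (∀ i, ∑ j, D i j = 1) ∧ (∀ j, ∑ i, D i j = 1) ∧
      (∀ i, hσ.eigenvalues i = ∑ j, D i j * hρ.eigenvalues j) := by
  set V := (hρ.eigenvectorUnitary : Matrix m m ℂ) with hV
  set U := (hσ.eigenvectorUnitary : Matrix m m ℂ) with hUdef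
  set Pj := fun j : m => V * Matrix.single j j (1:ℂ) * star V with hPj
  set C := fun i j : m => (star U * Λ (Pj j) * U) i i with hC
  have hc1 : star U * U = 1 := by rw [hUdef]; exact star_mul_self_eigen hσ
  have hc2 : U * star U = 1 := by rw [hUdef]; exact mul_star_self_eigen hσ
  have hv1 : star V * V = 1 := by rw [hV]; exact star_mul_self_eigen hρ
  have hv2 : V * star V = 1 := by rw [hV]; exact mul_star_self_eigen hρ
  have hPpsd : ∀ j, (Pj j).PosSemidef := fun j => by
    rw [hPj]
    simpa only [Matrix.star_eq_conjTranspose] using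
      (psd_stdBasis j).mul_mul_conjTranspose_same V
  have hCpsd : ∀ j, (star U * Λ (Pj j) * U).PosSemidef := fun j => by
    simpa only [Matrix.star_eq_conjTranspose] using
      (hpos _ (hPpsd j)).conjTranspose_mul_mul_same U
  have hC0 : ∀ i j, 0 ≤ C i j := fun i j => diag_nonneg (hCpsd j) i
  have hCreal : ∀ i j, C i j = ((C i j).re : ℂ) := fun i j => by
    have h := (Complex.nonneg_iff.mp (hC0 i j)).2
    apply Complex.ext
    · simp
    · simp [← h]
  have hsumP : ∑ j, Pj j = 1 := by
    simp only [hPj]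
    rw [← Finset.sum_mul, ← Finset.mul_sum, sum_stdBasis, Matrix.mul_one, hv2]
  have hdiag : star U * (Λ ρ) * U = Matrix.diagonal (RCLike.ofReal ∘ hσ.eigenvalues) := by
    conv_lhs => rw [spectral_eq' hσ]
    rw [← hUdef]
    have haux : ∀ X : Matrix m m ℂ, star U * (U * X) = X := fun X => by
      rw [← Matrix.mul_assoc, hc1, Matrix.one_mul]
    simp only [Matrix.mul_assoc]
    rw [hc1, Matrix.mul_one, haux]
  have hρsum : ρ = ∑ j, (hρ.eigenvalues j : ℂ) • Pj j := by
    conv_lhs => rw [spectral_eq' hρ]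
    rw [← hV, diagonal_eq_sum, Finset.mul_sum, Finset.sum_mul]
    refine Finset.sum_congr rfl fun j _ => ?_
    simp only [hPj, Matrix.mul_smul, Matrix.smul_mul]
    rfl
  have hkey : ∀ i, (hσ.eigenvalues i : ℂ) = ∑ j, (hρ.eigenvalues j : ℂ) * C i j := by
    intro i
    have e1 : Λ ρ = ∑ j, (hρ.eigenvalues j : ℂ) • Λ (Pj j) := by
      conv_lhs => rw [hρsum]
      rw [map_sum]
      exact Finset.sum_congr rfl fun j _ => Λ.map_smul _ _
    have e2 : Matrix.diagonal (RCLike.ofReal ∘ hσ.eigenvalues) =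
        ∑ j, (hρ.eigenvalues j : ℂ) • (star U * Λ (Pj j) * U) := by
      rw [← hdiag, e1, Finset.mul_sum, Finset.sum_mul]
      exact Finset.sum_congr rfl fun j _ => by
        rw [Matrix.mul_smul, Matrix.smul_mul]
    have e3 := congrArg (fun M : Matrix m m ℂ => M i i) e2
    simp only [Matrix.sum_apply, Matrix.smul_apply, smul_eq_mul,
      Matrix.diagonal_apply_eq] at e3
    exact e3
  refine ⟨fun i j => (C i j).re, fun i j => (Complex.nonneg_iff.mp (hC0 i j)).1, ?_, ?_, ?_⟩
  · intro i
    have e3 : ∑ j, star U * Λ (Pj j) * U = 1 := by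
      rw [← Finset.sum_mul, ← Finset.mul_sum, ← map_sum, hsumP, hu, Matrix.mul_one, hc1]
    have e4 := congrArg (fun M : Matrix m m ℂ => M i i) e3
    simp only [Matrix.sum_apply] at e4
    have hrow : ∑ j, C i j = 1 := by
      rw [hC]; exact e4.trans (Matrix.one_apply_eq i)
    have := congrArg Complex.re hrow
    rwa [Complex.re_sum, Complex.one_re] at this
  · intro j
    have hcol : ∑ i, C i j = 1 := by
      have t1 : ∑ i, C i j = (star U * Λ (Pj j) * U).trace := by
        simp [hC, Matrix.trace, Matrix.diag]
      rw [t1, Matrix.trace_mul_cycle, hc2, Matrix.one_mul, htp, hPj,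
        Matrix.trace_mul_cycle, hv1, Matrix.one_mul, trace_stdBasis]
    have := congrArg Complex.re hcol
    rwa [Complex.re_sum, Complex.one_re] at this
  · intro i
    have h1 := congrArg Complex.re (hkey i)
    rw [Complex.ofReal_re, Complex.re_sum] at h1
    rw [h1]
    refine Finset.sum_congr rfl fun j _ => ?_
    rw [hCreal i j, ← Complex.ofReal_mul, Complex.ofReal_re, mul_comm]

end MapEntAux

namespace MapEntAux
set_option linter.unusedSectionVars false

open Matrix Complex Real

variable {m : Type*} [Fintype m] [DecidableEq m]

lemma jensen_DS {D : m → m → ℝ} {lam mu : m → ℝ}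
    (hD0 : ∀ i j, 0 ≤ D i j) (hrow : ∀ i, ∑ j, D i j = 1) (hcol : ∀ j, ∑ i, D i j = 1)
    (hlam : ∀ j, 0 ≤ lam j) (hmu : ∀ i, mu i = ∑ j, D i j * lam j) :
    (∑ j, Real.negMulLog (lam j) ≤ ∑ i, Real.negMulLog (mu i)) ∧
    ((∑ i, Real.negMulLog (mu i) = ∑ j, Real.negMulLog (lam j)) →
      ∑ i, (mu i)^2 = ∑ j, (lam j)^2) := by
  have hmu0 : ∀ i, 0 ≤ mu i := fun i => by
    rw [hmu i]; exact Finset.sum_nonneg fun j _ => mul_nonneg (hD0 i j) (hlam j)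
  have hterm : ∀ i j, D i j * lam j ≤ mu i := fun i j => by
    rw [hmu i]
    exact Finset.single_le_sum (fun k _ => mul_nonneg (hD0 i k) (hlam k)) (Finset.mem_univ j)
  set T : m → m → ℝ := fun i j =>
    D i j * lam j * (Real.log (lam j) - Real.log (mu i)) - (D i j * lam j - D i j * mu i)
    with hT
  have heqT : ∀ i j, 0 < lam j →
      D i j * lam j * ((mu i / lam j - 1) - (Real.log (mu i) - Real.log (lam j))) = T i j := by
    intro i j hl
    rw [hT]
    field_simp
    ring
  have hT0 : ∀ i j, 0 ≤ T i j := by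
    intro i j
    rcases eq_or_lt_of_le (hD0 i j) with hD | hD
    · simp [hT, ← hD]
    · rcases eq_or_lt_of_le (hlam j) with hl | hl
      · have he : T i j = D i j * mu i := by rw [hT]; simp only; rw [← hl]; ring
        rw [he]
        exact mul_nonneg (hD0 i j) (hmu0 i)
      · have hmup : 0 < mu i :=
          lt_of_lt_of_le (mul_pos hD hl) (hterm i j)
        have hlog := Real.log_le_sub_one_of_pos (div_pos hmup hl)
        rw [Real.log_div (ne_of_gt hmup) (ne_of_gt hl)] at hlog
        rw [← heqT i j hl]
        exact mul_nonneg (mul_nonneg hD.le hl.le) (by linarith)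
  have h1 : ∑ i, ∑ j, D i j * lam j * Real.log (lam j) = ∑ j, lam j * Real.log (lam j) := by
    rw [Finset.sum_comm]
    refine Finset.sum_congr rfl fun j _ => ?_
    simp only [mul_assoc]
    rw [← Finset.sum_mul, hcol j, one_mul]
  have h2 : ∑ i, ∑ j, D i j * lam j * Real.log (mu i) = ∑ i, mu i * Real.log (mu i) := by
    refine Finset.sum_congr rfl fun i _ => ?_
    rw [← Finset.sum_mul, ← hmu i]
  have h3 : ∑ i, ∑ j, D i j * lam j = ∑ j, lam j := by
    rw [Finset.sum_comm]
    refine Finset.sum_congr rfl fun j _ => ?_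
    rw [← Finset.sum_mul, hcol j, one_mul]
  have h4 : ∑ i, ∑ j, D i j * mu i = ∑ i, mu i := by
    refine Finset.sum_congr rfl fun i _ => ?_
    rw [← Finset.sum_mul, hrow i, one_mul]
  have h5 : ∑ i, mu i = ∑ j, lam j := by
    rw [← h3]
    exact Finset.sum_congr rfl fun i _ => hmu i
  have hsum : ∑ i, ∑ j, T i j = ∑ i, Real.negMulLog (mu i) - ∑ j, Real.negMulLog (lam j) := by
    have expand : ∀ i j, T i j = (D i j * lam j * Real.log (lam j))
        - (D i j * lam j * Real.log (mu i)) - (D i j * lam j) + (D i j * mu i) := by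
      intro i j; rw [hT]; ring
    simp only [expand, Finset.sum_add_distrib, Finset.sum_sub_distrib]
    rw [h1, h2, h3, h4, h5]
    simp only [Real.negMulLog, neg_mul, Finset.sum_neg_distrib]
    ring
  constructor
  · have := Finset.sum_nonneg (fun i (_ : i ∈ Finset.univ) =>
      Finset.sum_nonneg fun j (_ : j ∈ Finset.univ) => hT0 i j)
    rw [hsum] at this
    linarith
  · intro heq
    have hTzsum : ∑ i, ∑ j, T i j = 0 := by rw [hsum, heq]; ring
    have hTz : ∀ i j, T i j = 0 := by
      intro i j
      have houter := (Finset.sum_eq_zero_iff_of_nonneg (fun i (_ : i ∈ Finset.univ) =>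
        Finset.sum_nonneg fun j (_ : j ∈ Finset.univ) => hT0 i j)).1 hTzsum i (Finset.mem_univ i)
      exact (Finset.sum_eq_zero_iff_of_nonneg (fun j (_ : j ∈ Finset.univ) => hT0 i j)).1
        houter j (Finset.mem_univ j)
    have hmatch : ∀ i j, D i j ≠ 0 → mu i = lam j := by
      intro i j hD
      have hDpos : 0 < D i j := lt_of_le_of_ne (hD0 i j) (Ne.symm hD)
      rcases eq_or_lt_of_le (hlam j) with hl | hl
      · have he : T i j = D i j * mu i := by rw [hT]; simp only; rw [← hl]; ring
        have h0 : D i j * mu i = 0 := by rw [← he, hTz i j]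
        rcases mul_eq_zero.mp h0 with h | h
        · exact absurd h hD
        · rw [h, ← hl]
      · have hmup : 0 < mu i := lt_of_lt_of_le (mul_pos hDpos hl) (hterm i j)
        by_contra hne
        have hrat : mu i / lam j ≠ 1 := by
          intro hc
          exact hne ((div_eq_one_iff_eq (ne_of_gt hl)).mp hc)
        have hstrict := Real.log_lt_sub_one_of_pos (div_pos hmup hl) hrat
        rw [Real.log_div (ne_of_gt hmup) (ne_of_gt hl)] at hstrict
        have hpos' : 0 < T i j := by
          rw [← heqT i j hl]
          exact mul_pos (mul_pos hDpos hl) (by linarith)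
        exact absurd (hTz i j) (ne_of_gt hpos')
    calc ∑ i, mu i ^ 2 = ∑ i, ∑ j, D i j * lam j * mu i := by
          refine Finset.sum_congr rfl fun i _ => ?_
          rw [pow_two]
          nth_rewrite 1 [hmu i]
          rw [Finset.sum_mul]
      _ = ∑ i, ∑ j, D i j * (lam j * lam j) := by
          refine Finset.sum_congr rfl fun i _ => Finset.sum_congr rfl fun j _ => ?_
          rcases eq_or_ne (D i j) 0 with h | h
          · rw [h]; ring
          · rw [hmatch i j h]; ring
      _ = ∑ j, lam j ^ 2 := by
          rw [Finset.sum_comm]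
          refine Finset.sum_congr rfl fun j _ => ?_
          rw [← Finset.sum_mul, hcol j, one_mul, pow_two]

lemma sq_sum_le {D : m → m → ℝ} {lam mu : m → ℝ}
    (hD0 : ∀ i j, 0 ≤ D i j) (hrow : ∀ i, ∑ j, D i j = 1) (hcol : ∀ j, ∑ i, D i j = 1)
    (hmu : ∀ i, mu i = ∑ j, D i j * lam j) :
    ∑ i, (mu i)^2 ≤ ∑ j, (lam j)^2 := by
  have hstep : ∀ i, mu i ^ 2 ≤ ∑ j, D i j * lam j ^ 2 := by
    intro i
    have hcs := Finset.sum_mul_sq_le_sq_mul_sq Finset.univ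
      (fun j => Real.sqrt (D i j)) (fun j => Real.sqrt (D i j) * lam j)
    have e1 : ∀ j : m, Real.sqrt (D i j) * (Real.sqrt (D i j) * lam j) = D i j * lam j :=
      fun j => by rw [← mul_assoc, Real.mul_self_sqrt (hD0 i j)]
    have e3 : ∀ j : m, (Real.sqrt (D i j) * lam j)^2 = D i j * lam j ^ 2 :=
      fun j => by rw [mul_pow, Real.sq_sqrt (hD0 i j)]
    have e2 : ∀ j : m, (Real.sqrt (D i j))^2 = D i j := fun j => Real.sq_sqrt (hD0 i j)
    simp only [e1, e3, e2] at hcs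
    rw [hrow i, one_mul] at hcs
    rw [hmu i]
    exact hcs
  calc ∑ i, mu i ^ 2 ≤ ∑ i, ∑ j, D i j * lam j ^ 2 := Finset.sum_le_sum fun i _ => hstep i
    _ = ∑ j, lam j ^ 2 := by
        rw [Finset.sum_comm]
        refine Finset.sum_congr rfl fun j _ => ?_
        rw [← Finset.sum_mul, hcol j, one_mul]

end MapEntAux

namespace MapEntAux
set_option linter.unusedSectionVars false

open Matrix Complex Real

variable {m : Type*} [Fintype m] [DecidableEq m]

lemma entropy_core (Λ : Matrix m m ℂ →ₗ[ℂ] Matrix m m ℂ)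
    (hpos : ∀ P : Matrix m m ℂ, P.PosSemidef → (Λ P).PosSemidef)
    (hu : Λ 1 = 1) (htp : ∀ M : Matrix m m ℂ, (Λ M).trace = M.trace)
    {ρ : Matrix m m ℂ} (hρ : ρ.PosSemidef) :
    sEntropy ρ ≤ sEntropy (Λ ρ) ∧
    (sEntropy (Λ ρ) = sEntropy ρ → hsNormSq (Λ ρ) = hsNormSq ρ) := by
  have hσ : (Λ ρ).PosSemidef := hpos ρ hρ
  obtain ⟨D, hD0, hrow, hcol, hmuD⟩ := exists_DS Λ hpos hu htp hρ.1 hσ.1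
  have hlam : ∀ j, 0 ≤ hρ.1.eigenvalues j := hρ.eigenvalues_nonneg
  obtain ⟨hineq, heqc⟩ := jensen_DS hD0 hrow hcol hlam hmuD
  rw [sEntropy_eq hρ.1, sEntropy_eq hσ.1, hsNormSq_of_isHermitian hρ.1,
    hsNormSq_of_isHermitian hσ.1]
  exact ⟨hineq, heqc⟩

lemma hs_contraction (Λ : Matrix m m ℂ →ₗ[ℂ] Matrix m m ℂ)
    (hpos : ∀ P : Matrix m m ℂ, P.PosSemidef → (Λ P).PosSemidef)
    (hu : Λ 1 = 1) (htp : ∀ M : Matrix m m ℂ, (Λ M).trace = M.trace)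
    {X : Matrix m m ℂ} (hX : X.PosSemidef) : hsNormSq (Λ X) ≤ hsNormSq X := by
  have hσ : (Λ X).PosSemidef := hpos X hX
  obtain ⟨D, hD0, hrow, hcol, hmuD⟩ := exists_DS Λ hpos hu htp hX.1 hσ.1
  rw [hsNormSq_of_isHermitian hX.1, hsNormSq_of_isHermitian hσ.1]
  exact sq_sum_le hD0 hrow hcol hmuD

lemma psd_smul_coe {M : Matrix m m ℂ} (hM : M.PosSemidef) (c : ℝ) (hc : 0 ≤ c) :
    (((c : ℂ)) • M).PosSemidef := by
  refine Matrix.PosSemidef.of_dotProduct_mulVec_nonneg ?_ ?_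
  · show _ᴴ = _
    rw [Matrix.conjTranspose_smul, hM.1]
    congr 1
    simp [Complex.star_def, Complex.conj_ofReal]
  · intro x
    rw [Matrix.smul_mulVec, dotProduct_smul]
    exact mul_nonneg (Complex.zero_le_real.mpr hc) (hM.dotProduct_mulVec_nonneg x)

lemma trace_stdBasis' (a b : m) :
    (Matrix.single a b (1:ℂ)).trace = if a = b then 1 else 0 := by
  rcases eq_or_ne a b with rfl | h
  · simp [trace_stdBasis]
  · simp only [Matrix.trace, Matrix.diag, Matrix.single, Matrix.of_apply, h, if_neg,
      if_false]
    apply Finset.sum_eq_zero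
    intro i _
    rcases eq_or_ne a i with rfl | hai
    · exact if_neg (by rintro ⟨h1, h2⟩; exact h h2.symm)
    · simp [hai]

end MapEntAux

namespace MapEntAux
set_option linter.unusedSectionVars false

open Matrix Complex Real

variable {n : Type*} [Fintype n] [DecidableEq n]

lemma applyLeft_apply (Φ : Matrix n n ℂ →ₗ[ℂ] Matrix n n ℂ)
    (M : Matrix (n × n) (n × n) ℂ) (p q : n × n) :
    applyLeft Φ M p q = Φ (Matrix.of fun i j => M (i, p.2) (j, q.2)) p.1 q.1 := rfl

/-- `applyLeft Φ` as a linear map. -/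
noncomputable def applyLeftLM (Φ : Matrix n n ℂ →ₗ[ℂ] Matrix n n ℂ) :
    Matrix (n × n) (n × n) ℂ →ₗ[ℂ] Matrix (n × n) (n × n) ℂ where
  toFun := applyLeft Φ
  map_add' A B := by
    ext p q
    have h : (Matrix.of fun i j => (A + B) (i, p.2) (j, q.2)) =
        (Matrix.of fun i j => A (i, p.2) (j, q.2)) +
        (Matrix.of fun i j => B (i, p.2) (j, q.2)) := by
      ext i j; simp
    show Φ (Matrix.of fun i j => (A + B) (i, p.2) (j, q.2)) p.1 q.1 =
      Φ (Matrix.of fun i j => A (i, p.2) (j, q.2)) p.1 q.1 +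
      Φ (Matrix.of fun i j => B (i, p.2) (j, q.2)) p.1 q.1
    rw [h, map_add, Matrix.add_apply]
  map_smul' c A := by
    ext p q
    have h : (Matrix.of fun i j => (c • A) (i, p.2) (j, q.2)) =
        c • (Matrix.of fun i j => A (i, p.2) (j, q.2)) := by
      ext i j; simp
    show Φ (Matrix.of fun i j => (c • A) (i, p.2) (j, q.2)) p.1 q.1 =
      (c • Φ (Matrix.of fun i j => A (i, p.2) (j, q.2))) p.1 q.1
    rw [h, LinearMap.map_smul]

@[simp] lemma applyLeftLM_apply (Φ : Matrix n n ℂ →ₗ[ℂ] Matrix n n ℂ)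
    (M : Matrix (n × n) (n × n) ℂ) : applyLeftLM Φ M = applyLeft Φ M := rfl

lemma applyLeft_one {Φ : Matrix n n ℂ →ₗ[ℂ] Matrix n n ℂ} (hUn : Φ 1 = 1) :
    applyLeft Φ (1 : Matrix (n × n) (n × n) ℂ) = 1 := by
  ext p q
  rw [applyLeft_apply]
  have hslice : (Matrix.of fun i j => (1 : Matrix (n × n) (n × n) ℂ) (i, p.2) (j, q.2)) =
      if p.2 = q.2 then (1 : Matrix n n ℂ) else 0 := by
    split_ifs with h
    · ext i j; simp [Matrix.one_apply, Prod.ext_iff, h]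
    · ext i j; simp [Matrix.one_apply, Prod.ext_iff, h]
  rw [hslice]
  split_ifs with h
  · rw [hUn]
    simp [Matrix.one_apply, Prod.ext_iff, h]
  · rw [map_zero]
    simp [Matrix.one_apply, Prod.ext_iff, h]

lemma applyLeft_trace {Φ : Matrix n n ℂ →ₗ[ℂ] Matrix n n ℂ}
    (hTP : ∀ X : Matrix n n ℂ, (Φ X).trace = X.trace)
    (M : Matrix (n × n) (n × n) ℂ) : (applyLeft Φ M).trace = M.trace := by
  simp only [Matrix.trace, Matrix.diag]
  rw [Fintype.sum_prod_type, Finset.sum_comm]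
  conv_rhs => rw [Fintype.sum_prod_type, Finset.sum_comm]
  refine Finset.sum_congr rfl fun p2 _ => ?_
  have h1 : ∑ p1 : n, applyLeft Φ M (p1, p2) (p1, p2) =
      (Φ (Matrix.of fun i j => M (i, p2) (j, p2))).trace := by
    simp only [Matrix.trace, Matrix.diag, applyLeft_apply]
  rw [h1, hTP]
  simp only [Matrix.trace, Matrix.diag, Matrix.of_apply]

lemma hsDot_slices (X Y : Matrix (n × n) (n × n) ℂ) :
    hsDot X Y = ∑ s : n, ∑ t : n,
      hsDot (Matrix.of fun i j => X (i, s) (j, t)) (Matrix.of fun i j => Y (i, s) (j, t)) := by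
  simp only [hsDot_eq_sum, Matrix.of_apply]
  rw [Fintype.sum_prod_type, Finset.sum_comm]
  refine Finset.sum_congr rfl fun s _ => ?_
  have hinner : ∀ i : n, (∑ b : n × n, (starRingEnd ℂ) (X (i, s) b) * Y (i, s) b) =
      ∑ t : n, ∑ j : n, (starRingEnd ℂ) (X (i, s) (j, t)) * Y (i, s) (j, t) := by
    intro i
    rw [Fintype.sum_prod_type, Finset.sum_comm]
  simp only [hinner]
  rw [Finset.sum_comm]

lemma applyLeft_adjoint (Φ Φd : Matrix n n ℂ →ₗ[ℂ] Matrix n n ℂ)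
    (hAdj : IsHSAdjoint Φ Φd) (A B : Matrix (n × n) (n × n) ℂ) :
    hsDot (applyLeft Φ A) B = hsDot A (applyLeft Φd B) := by
  rw [hsDot_slices (applyLeft Φ A) B, hsDot_slices A (applyLeft Φd B)]
  refine Finset.sum_congr rfl fun s _ => Finset.sum_congr rfl fun t _ => ?_
  have hX : (Matrix.of fun i j => (applyLeft Φ A) (i, s) (j, t)) =
      Φ (Matrix.of fun i j => A (i, s) (j, t)) := by
    ext i j; rfl
  have hY : (Matrix.of fun i j => (applyLeft Φd B) (i, s) (j, t)) =
      Φd (Matrix.of fun i j => B (i, s) (j, t)) := by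
    ext i j; rfl
  rw [hX, hY]
  exact hAdj _ _

lemma choi_comp (Φ Ψ : Matrix n n ℂ →ₗ[ℂ] Matrix n n ℂ) :
    choi (Φ ∘ₗ Ψ) = applyLeft Φ (choi Ψ) := by
  ext p q
  rw [applyLeft_apply]
  show Φ (Ψ (Matrix.single p.2 q.2 1)) p.1 q.1 = _
  have hXY : (Matrix.of fun i j => choi Ψ (i, p.2) (j, q.2)) =
      Ψ (Matrix.single p.2 q.2 1) := by
    ext i j
    rfl
  rw [hXY]

lemma stdBasis_smul (i j : n) (c : ℂ) :
    Matrix.single i j c = c • Matrix.single i j 1 := by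
  ext a b
  simp only [Matrix.single, Matrix.smul_apply, Matrix.of_apply, smul_eq_mul,
    mul_ite, mul_one, mul_zero]

lemma choi_inj {Θ₁ Θ₂ : Matrix n n ℂ →ₗ[ℂ] Matrix n n ℂ} (h : choi Θ₁ = choi Θ₂) :
    Θ₁ = Θ₂ := by
  have hbasis : ∀ i j : n, Θ₁ (Matrix.single i j (1:ℂ)) =
      Θ₂ (Matrix.single i j 1) := by
    intro i j
    ext a b
    have h2 : choi Θ₁ (a, i) (b, j) = choi Θ₂ (a, i) (b, j) := by rw [h]
    exact h2
  apply LinearMap.ext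
  intro X
  have hX := Matrix.matrix_eq_sum_single X
  rw [hX, map_sum, map_sum]
  refine Finset.sum_congr rfl fun i _ => ?_
  rw [map_sum, map_sum]
  refine Finset.sum_congr rfl fun j _ => ?_
  rw [stdBasis_smul, LinearMap.map_smul, LinearMap.map_smul, hbasis]

lemma choi_psd {N : ℕ} (Ψ : Matrix (Fin N) (Fin N) ℂ →ₗ[ℂ] Matrix (Fin N) (Fin N) ℂ)
    (hΨ : IsCP Ψ) : (choi Ψ).PosSemidef := by
  set x : Fin N × Fin N → ℂ := fun p => if p.1 = p.2 then 1 else 0 with hx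
  have hΩ : (outer x).PosSemidef := outer_psd x
  have hmain := hΨ N (outer x) hΩ
  have heq : tensorExt Ψ N (outer x) = choi Ψ := by
    ext p q
    show Ψ (Matrix.of fun i j => outer x (i, p.2) (j, q.2)) p.1 q.1 =
      Ψ (Matrix.single p.2 q.2 1) p.1 q.1
    have hXY : (Matrix.of fun i j => outer x (i, p.2) (j, q.2)) =
        Matrix.single p.2 q.2 (1:ℂ) := by
      ext i j
      simp only [outer, Matrix.of_apply, hx, Matrix.single]
      rcases eq_or_ne i p.2 with rfl | h1 <;> rcases eq_or_ne j q.2 with rfl | h2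
      · simp
      · simp [h2, Ne.symm h2]
      · simp [h1, Ne.symm h1]
      · simp [h1, Ne.symm h1, h2, Ne.symm h2]
    rw [hXY]
  rw [← heq]
  exact hmain

end MapEntAux

open MapEntAux in
/-- `S^map(Φ ∘ Ψ) = S^map(Ψ)` iff `Φ† ∘ Φ ∘ Ψ = Ψ`. -/
theorem mapEntropy_eq_iff {N : ℕ} (hN : 0 < N)
    (Φ Φd Ψ : Matrix (Fin N) (Fin N) ℂ →ₗ[ℂ] Matrix (Fin N) (Fin N) ℂ)
    (hCP : IsCP Φ) (hTP : IsTP Φ) (hUn : IsUnital Φ)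
    (hAdj : IsHSAdjoint Φ Φd)
    (hΨCP : IsCP Ψ) (hΨTP : IsTP Ψ) :
    sEntropy ((N : ℂ)⁻¹ • choi (Φ ∘ₗ Ψ)) = sEntropy ((N : ℂ)⁻¹ • choi Ψ) ↔
      Φd ∘ₗ Φ ∘ₗ Ψ = Ψ := by
  have hNC : (N : ℂ) ≠ 0 := Nat.cast_ne_zero.mpr hN.ne'
  set Λ := applyLeftLM Φ with hΛdef
  set Λd := applyLeftLM Φd with hΛddef
  have hΛpos : ∀ P : Matrix (Fin N × Fin N) (Fin N × Fin N) ℂ,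
      P.PosSemidef → (Λ P).PosSemidef := fun P hP => hCP N P hP
  have hΛone : Λ (1 : Matrix (Fin N × Fin N) (Fin N × Fin N) ℂ) = 1 := applyLeft_one hUn
  have hΛtr : ∀ M : Matrix (Fin N × Fin N) (Fin N × Fin N) ℂ, (Λ M).trace = M.trace :=
    fun M => applyLeft_trace hTP M
  have hadjbig : ∀ A B : Matrix (Fin N × Fin N) (Fin N × Fin N) ℂ,
      hsDot (Λ A) B = hsDot A (Λd B) := fun A B => applyLeft_adjoint Φ Φd hAdj A B
  have hΦd1 : Φd 1 = 1 := by
    ext a b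
    have h1 := hAdj (Matrix.single a b 1) 1
    rw [Matrix.mul_one] at h1
    have h2 : ((Φ (Matrix.single a b 1))ᴴ).trace =
        star ((Matrix.single a b (1:ℂ)).trace) := by
      rw [Matrix.trace_conjTranspose, hTP]
    have h3 : ((Matrix.single a b 1)ᴴ * (Φd 1)).trace = (Φd 1) a b :=
      hsDot_std a b (Φd 1)
    rw [h3, h2, trace_stdBasis'] at h1
    rw [← h1]
    rcases eq_or_ne a b with rfl | hab
    · simp [Matrix.one_apply]
    · simp [Matrix.one_apply, hab]
  have hΦdTP : ∀ B : Matrix (Fin N) (Fin N) ℂ, (Φd B).trace = B.trace := by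
    intro B
    have h1 := hAdj 1 B
    rw [hUn, Matrix.conjTranspose_one, Matrix.one_mul] at h1
    rw [Matrix.one_mul] at h1
    exact h1.symm
  have hΛdone : Λd (1 : Matrix (Fin N × Fin N) (Fin N × Fin N) ℂ) = 1 := applyLeft_one hΦd1
  have hΛdtr : ∀ M : Matrix (Fin N × Fin N) (Fin N × Fin N) ℂ, (Λd M).trace = M.trace :=
    fun M => applyLeft_trace hΦdTP M
  have hΛdpos : ∀ P : Matrix (Fin N × Fin N) (Fin N × Fin N) ℂ,
      P.PosSemidef → (Λd P).PosSemidef := fun P hP =>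
    psd_of_adjoint Λ (fun B => Λd B) hadjbig hΛpos hP
  have hJψ : (choi Ψ).PosSemidef := choi_psd Ψ hΨCP
  set ρ : Matrix (Fin N × Fin N) (Fin N × Fin N) ℂ := (N : ℂ)⁻¹ • choi Ψ with hρdef
  have hρpsd : ρ.PosSemidef := by
    have hc : (N : ℂ)⁻¹ = (((N : ℝ)⁻¹ : ℝ) : ℂ) := by push_cast; ring
    rw [hρdef, hc]
    exact psd_smul_coe hJψ _ (inv_nonneg.mpr (Nat.cast_nonneg N))
  have hLρ : (N : ℂ)⁻¹ • choi (Φ ∘ₗ Ψ) = Λ ρ := by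
    rw [choi_comp, hρdef, LinearMap.map_smul]
    rfl
  have hJcomp : choi (Φd ∘ₗ Φ ∘ₗ Ψ) = Λd (Λ (choi Ψ)) := by
    rw [choi_comp, choi_comp]
    rfl
  constructor
  · intro hS
    rw [hLρ] at hS
    have hcore := (entropy_core Λ hΛpos hΛone hΛtr hρpsd).2 hS
    have hΛρpsd : (Λ ρ).PosSemidef := hΛpos ρ hρpsd
    have hcontr : hsNormSq (Λd (Λ ρ)) ≤ hsNormSq (Λ ρ) :=
      hs_contraction Λd hΛdpos hΛdone hΛdtr hΛρpsd
    have hdot : (hsDot ρ (Λd (Λ ρ))).re = hsNormSq (Λ ρ) := by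
      rw [← hadjbig, ← hsNormSq_eq_dot, Complex.ofReal_re]
    have hzero : hsNormSq (Λd (Λ ρ) - ρ) ≤ 0 := by
      rw [hsNormSq_sub, hdot, hcore]
      linarith [hcontr, hcore]
    have hfix : Λd (Λ ρ) = ρ := eq_of_hsNormSq_sub_eq_zero hzero
    have hJfix : Λd (Λ (choi Ψ)) = choi Ψ := by
      have h5 : (N : ℂ) • (Λd (Λ ρ)) = (N : ℂ) • ρ := by rw [hfix]
      simp only [hρdef, LinearMap.map_smul, smul_smul, mul_inv_cancel₀ hNC, one_smul] at h5
      exact h5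
    apply choi_inj
    rw [hJcomp, hJfix]
  · intro hcomp
    have hfixJ : Λd (Λ (choi Ψ)) = choi Ψ := by rw [← hJcomp, hcomp]
    have hfix : Λd (Λ ρ) = ρ := by
      simp only [hρdef, LinearMap.map_smul, hfixJ]
    have h1 := (entropy_core Λ hΛpos hΛone hΛtr hρpsd).1
    have hΛρpsd : (Λ ρ).PosSemidef := hΛpos ρ hρpsd
    have h2 := (entropy_core Λd hΛdpos hΛdone hΛdtr hΛρpsd).1
    rw [hfix] at h2
    rw [hLρ]
    exact le_antisymm h2 h1
end

section
/- Let B be a bi-stochastic N×N real matrix and p an N-dimensional probability vector. Then the Shannon entropy satisfies H(Bp) = H(p) if and only if B^T B p = p. -/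
open Matrix Kronecker
open scoped Classical ComplexOrder

private lemma row_jensen {N : ℕ} (B : Matrix (Fin N) (Fin N) ℝ) (hB : IsBistochasticMat B)
    (p : Fin N → ℝ) (hp : IsProbVec p) (i : Fin N) :
    ∑ j, B i j * Real.negMulLog (p j) ≤ Real.negMulLog ((B *ᵥ p) i) := by
  have := Real.concaveOn_negMulLog.le_map_sum (t := Finset.univ) (w := B i) (p := p)
    (fun j _ => hB.1 i j) (hB.2.1 i) (fun j _ => hp.1 j)
  simpa [Matrix.mulVec, dotProduct, smul_eq_mul] using this

private lemma entropy_expand {N : ℕ} (B : Matrix (Fin N) (Fin N) ℝ) (hB : IsBistochasticMat B)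
    (p : Fin N → ℝ) :
    shannonEntropy p = ∑ i, ∑ j, B i j * Real.negMulLog (p j) := by
  rw [Finset.sum_comm]
  unfold shannonEntropy
  refine Finset.sum_congr rfl fun j _ => ?_
  rw [← Finset.sum_mul, hB.2.2 j, one_mul]

private lemma entropy_le {N : ℕ} (B : Matrix (Fin N) (Fin N) ℝ) (hB : IsBistochasticMat B)
    (p : Fin N → ℝ) (hp : IsProbVec p) :
    shannonEntropy p ≤ shannonEntropy (B *ᵥ p) := by
  rw [entropy_expand B hB p]
  exact Finset.sum_le_sum fun i _ => row_jensen B hB p hp i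

private lemma mulVec_probVec {N : ℕ} (B : Matrix (Fin N) (Fin N) ℝ) (hB : IsBistochasticMat B)
    (p : Fin N → ℝ) (hp : IsProbVec p) : IsProbVec (B *ᵥ p) := by
  constructor
  · intro i
    simp only [Matrix.mulVec, dotProduct]
    exact Finset.sum_nonneg fun j _ => mul_nonneg (hB.1 i j) (hp.1 j)
  · calc ∑ i, (B *ᵥ p) i = ∑ i, ∑ j, B i j * p j := by
          simp [Matrix.mulVec, dotProduct]
    _ = ∑ j, (∑ i, B i j) * p j := by
          rw [Finset.sum_comm]
          simp [Finset.sum_mul]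
    _ = 1 := by simp [hB.2.2, hp.2]


/-- `H(Bp) = H(p)` iff `BᵀBp = p` for bi-stochastic `B`. -/
theorem shannon_eq_iff_transpose_mul_fixed {N : ℕ}
    (B : Matrix (Fin N) (Fin N) ℝ) (hB : IsBistochasticMat B)
    (p : Fin N → ℝ) (hp : IsProbVec p) :
    shannonEntropy (B *ᵥ p) = shannonEntropy p ↔ Bᵀ *ᵥ (B *ᵥ p) = p := by
  constructor
  · intro heq
    -- termwise equality
    have hsum : ∑ i, ∑ j, B i j * Real.negMulLog (p j)
        = ∑ i, Real.negMulLog ((B *ᵥ p) i) := by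
      rw [← entropy_expand B hB p]; exact (heq.symm : _)
    have hterm : ∀ i ∈ Finset.univ, ∑ j, B i j * Real.negMulLog (p j)
        = Real.negMulLog ((B *ᵥ p) i) :=
      (Finset.sum_eq_sum_iff_of_le (fun i _ => row_jensen B hB p hp i)).1 hsum
    have hcond : ∀ i j, B i j ≠ 0 → p j = (B *ᵥ p) i := by
      intro i j hij
      have h := (Real.strictConcaveOn_negMulLog.map_sum_eq_iff' (t := Finset.univ)
        (w := B i) (p := p) (fun j _ => hB.1 i j) (hB.2.1 i) (fun j _ => hp.1 j)).1
      have heq' : Real.negMulLog (∑ j, B i j • p j) = ∑ j, B i j • Real.negMulLog (p j) := by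
        simpa [Matrix.mulVec, dotProduct, smul_eq_mul] using (hterm i (Finset.mem_univ i)).symm
      have := h heq' j (Finset.mem_univ j) hij
      simpa [Matrix.mulVec, dotProduct, smul_eq_mul] using this
    funext j
    calc (Bᵀ *ᵥ (B *ᵥ p)) j = ∑ i, B i j * (B *ᵥ p) i := by
          simp [Matrix.mulVec, dotProduct, Matrix.transpose_apply]
    _ = ∑ i, B i j * p j := by
          refine Finset.sum_congr rfl fun i _ => ?_
          by_cases h : B i j = 0
          · simp [h]
          · rw [hcond i j h]
    _ = p j := by rw [← Finset.sum_mul, hB.2.2 j, one_mul]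
  · intro hfix
    have hBt : IsBistochasticMat Bᵀ :=
      ⟨fun i j => hB.1 j i, fun i => hB.2.2 i, fun j => hB.2.1 j⟩
    have h1 := entropy_le B hB p hp
    have h2 := entropy_le Bᵀ hBt (B *ᵥ p) (mulVec_probVec B hB p hp)
    rw [hfix] at h2
    exact le_antisymm h2 h1
end
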